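/- arXiv:1409.0482 — 5 statements merged into one kernel-verified Lean document; each statement's English description precedes it below -/
import Mathlib

section
/- Every positive integer can be written uniquely as a sum of non-adjacent Fibonacci numbers (Zeckendorf's theorem). -/
/-- Fibonacci numbers normalized so that `Fib 1 = 1`, `Fib 2 = 2`,
`Fib (n+1) = Fib n + Fib (n-1)`. -/
def Fib (n : ℕ) : ℕ := Nat.fib (n + 1)

/-!
Shifting indices by one turns `Fib` into `Nat.fib`, and a set of indices `≥ 1` with no two
consecutive into a Zeckendorf representation in Mathlib's sense (`List.IsZeckendorfRep`): the
decreasing list of shifted indices, all `≥ 2` and pairwise at least `2` apart. This translation is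
a bijection, and `Nat.zeckendorf` inverts `l ↦ (l.map fib).sum` on Zeckendorf representations.
-/

open Nat

theorem List.Pairwise.rel_or_rel_of_ne {α : Type*} {R : α → α → Prop} {l : List α}
    (hl : l.Pairwise R) {a b : α} (ha : a ∈ l) (hb : b ∈ l) (hab : a ≠ b) : R a b ∨ R b a := by
  have : Std.Symm (fun x y : α ↦ R x y ∨ R y x) := ⟨fun _ _ ↦ Or.symm⟩
  exact List.Pairwise.forall (R := fun x y ↦ R x y ∨ R y x) (hl.imp Or.inl) ha hb hab

theorem List.isZeckendorfRep_iff_pairwise {l : List ℕ} :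
    l.IsZeckendorfRep ↔ l.Pairwise (fun a b ↦ b + 2 ≤ a) ∧ ∀ a ∈ l, 2 ≤ a := by
  have : Trans (fun a b : ℕ ↦ b + 2 ≤ a) (fun a b ↦ b + 2 ≤ a) (fun a b ↦ b + 2 ≤ a) :=
    ⟨fun hab hbc ↦ by omega⟩
  simp [List.IsZeckendorfRep, List.isChain_iff_pairwise, List.pairwise_append]

def fibIndices (s : Finset ℕ) : List ℕ := (s.sort (· ≥ ·)).map (· + 1)

theorem isZeckendorfRep_fibIndices_iff (s : Finset ℕ) :
    (fibIndices s).IsZeckendorfRep ↔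
      (∀ i ∈ s, 1 ≤ i) ∧ ∀ i ∈ s, ∀ j ∈ s, i < j → i + 1 < j := by
  rw [List.isZeckendorfRep_iff_pairwise, fibIndices, List.pairwise_map, List.forall_mem_map,
    and_comm]
  simp only [Finset.mem_sort, Nat.reduceLeDiff]
  refine and_congr_right fun _ ↦ ⟨fun h i hi j hj hij ↦ ?_, fun h ↦ ?_⟩
  · have := h.rel_or_rel_of_ne ((s.mem_sort _).2 hi) ((s.mem_sort _).2 hj) hij.ne
    omega
  · refine (s.sortedGT_sort.pairwise).imp_of_mem fun ha hb hba ↦ ?_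
    have := h _ ((s.mem_sort _).1 hb) _ ((s.mem_sort _).1 ha) hba
    omega

theorem sum_map_fib_fibIndices (s : Finset ℕ) :
    ((fibIndices s).map fib).sum = ∑ i ∈ s, Fib i := by
  rw [fibIndices, List.map_map, ← List.sum_toFinset _ (s.sort_nodup _), Finset.sort_toFinset]
  rfl

theorem fibIndices_injective : Function.Injective fibIndices := by
  intro s t hst
  rw [← s.sort_toFinset (· ≥ ·), ← t.sort_toFinset (· ≥ ·),
    (List.map_injective_iff.2 (add_left_injective 1)) hst]

theorem exists_fibIndices_eq {l : List ℕ} (hl : l.IsZeckendorfRep) : ∃ s, fibIndices s = l := by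
  obtain ⟨hpair, htwo⟩ := List.isZeckendorfRep_iff_pairwise.1 hl
  refine ⟨(l.map (· - 1)).toFinset, ?_⟩
  have hsort : ((l.map (· - 1)).toFinset.sort (· ≥ ·)) = l.map (· - 1) := by
    refine (Finset.sortedGT_sort _).pairwise.eq_of_mem_iff ?_ (by simp)
    refine List.pairwise_map.2 (hpair.imp_of_mem fun ha hb hba ↦ ?_)
    have := htwo _ ha
    omega
  rw [fibIndices, hsort, List.map_map]
  conv_rhs => rw [← l.map_id]
  exact List.map_congr_left fun a ha ↦ Nat.sub_add_cancel (by have := htwo a ha; omega)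

theorem zeckendorf_general (m : ℕ) :
    ∃! s : Finset ℕ,
      (∀ i ∈ s, 1 ≤ i) ∧
      (∀ i ∈ s, ∀ j ∈ s, i < j → i + 1 < j) ∧
      m = ∑ i ∈ s, Fib i := by
  obtain ⟨s, hs⟩ := exists_fibIndices_eq (isZeckendorfRep_zeckendorf m)
  obtain ⟨hs₁, hs₂⟩ := (isZeckendorfRep_fibIndices_iff s).1 (hs ▸ isZeckendorfRep_zeckendorf m)
  refine ⟨s, ⟨hs₁, hs₂, ?_⟩, fun t ⟨ht₁, ht₂, hm⟩ ↦ fibIndices_injective ?_⟩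
  · rw [← sum_map_fib_fibIndices, hs, sum_zeckendorf_fib]
  · rw [hs, ← zeckendorf_sum_fib ((isZeckendorfRep_fibIndices_iff t).2 ⟨ht₁, ht₂⟩),
      sum_map_fib_fibIndices, ← hm]

/-- **Zeckendorf's theorem.** Every positive integer can be written uniquely as a
sum of non-adjacent Fibonacci numbers. -/
theorem zeckendorf (m : ℕ) (hm : 0 < m) :
    ∃! s : Finset ℕ,
      (∀ i ∈ s, 1 ≤ i) ∧
      (∀ i ∈ s, ∀ j ∈ s, i < j → i + 1 < j) ∧
      m = ∑ i ∈ s, Fib i :=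
  zeckendorf_general m
end

section
/- If m = F_{a_1} + F_{a_2} + ... + F_{a_k} is the Zeckendorf decomposition of m with 1 ≤ a_1, a_{j-1}+1 < a_j, and a_k ≤ n, then the probability that the random process A_n(p) equals the set {F_{a_1},...,F_{a_k}} is p^k (1-p)^{n-2k} if a_k < n, and p^k (1-p)^{n-2k+1} if a_k = n. -/
open Finset

noncomputable section

/-- `included c k` : whether `F_{k+1}` is included in the random Zeckendorf process,
given coins `c` (`c k` is the coin for step `k+1`): a Fibonacci number is included
with probability `p` when the previous one was not included, and is excluded otherwise. -/
def included (c : ℕ → Bool) : ℕ → Bool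
  | 0 => c 0
  | k + 1 => !included c k && c (k + 1)

/-- Extend a finite coin sequence by `false`. -/
def ext (n : ℕ) (c : Fin n → Bool) : ℕ → Bool :=
  fun j => if h : j < n then c ⟨j, h⟩ else false

/-- Probability weight of a finite coin sequence, each coin heads with probability `p`. -/
def wt (p : ℝ) {n : ℕ} (c : Fin n → Bool) : ℝ :=
  ∏ i, if c i then p else 1 - p

open Classical in
/-- Probability of an event depending on the first `n` coins. -/
def finProb (p : ℝ) (n : ℕ) (E : (ℕ → Bool) → Prop) : ℝ :=
  ∑ c : Fin n → Bool, if E (ext n c) then wt p c else 0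

/-- `Prob (F_k ∈ A(p))` for `k ≥ 1`. -/
def probIncl (p : ℝ) (k : ℕ) : ℝ :=
  finProb p k (fun c => included c (k - 1) = true)

/-- Expected value of a function of the first `n` coins. -/
def expVal (p : ℝ) (n : ℕ) (f : (ℕ → Bool) → ℝ) : ℝ :=
  ∑ c : Fin n → Bool, wt p c * f (ext n c)

/-- `W_n` : the number of selected indices among `1,...,n`. -/
def countIn (n : ℕ) (c : ℕ → Bool) : ℕ :=
  ((Icc 1 n).filter (fun j => included c (j - 1) = true)).card

lemma included_congr : ∀ (j : ℕ) {c c' : ℕ → Bool},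
    (∀ i ≤ j, c i = c' i) → included c j = included c' j
  | 0, c, c', h => by simp [included, h 0 le_rfl]
  | j + 1, c, c', h => by
      have h1 := included_congr j (c := c) (c' := c') (fun i hi => h i (Nat.le_succ_of_le hi))
      simp [included, h1, h (j + 1) le_rfl]

lemma ext_snoc_lt {n : ℕ} (c : Fin n → Bool) (b : Bool) {i : ℕ} (hi : i < n) :
    ext (n + 1) (Fin.snoc c b) i = ext n c i := by
  simp only [_root_.ext, dif_pos hi, dif_pos (Nat.lt_succ_of_lt hi)]
  rw [show (⟨i, Nat.lt_succ_of_lt hi⟩ : Fin (n + 1)) = Fin.castSucc ⟨i, hi⟩ from rfl,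
    Fin.snoc_castSucc]

lemma ext_snoc_last {n : ℕ} (c : Fin n → Bool) (b : Bool) :
    ext (n + 1) (Fin.snoc c b) n = b := by
  simp only [_root_.ext, dif_pos (Nat.lt_succ_self n)]
  rw [show (⟨n, Nat.lt_succ_self n⟩ : Fin (n + 1)) = Fin.last n from rfl, Fin.snoc_last]

lemma included_ext_snoc {n : ℕ} (c : Fin n → Bool) (b : Bool) {j : ℕ} (hj : j < n) :
    included (ext (n + 1) (Fin.snoc c b)) j = included (ext n c) j :=
  included_congr j (fun i hi => ext_snoc_lt c b (lt_of_le_of_lt hi hj))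

lemma wt_snoc (p : ℝ) {n : ℕ} (c : Fin n → Bool) (b : Bool) :
    wt p (Fin.snoc c b) = wt p c * (if b then p else 1 - p) := by
  simp [wt, Fin.prod_univ_castSucc]

lemma included_snoc {n : ℕ} (c : Fin n → Bool) (b : Bool) :
    included (ext (n + 1) (Fin.snoc c b)) n
      = (((n == 0) || !included (ext n c) (n - 1)) && b) := by
  cases n with
  | zero => simp [included, ext_snoc_last]
  | succ m =>
      show included _ (m + 1) = _
      simp only [included, included_ext_snoc c b (Nat.lt_succ_self m), ext_snoc_last]
      simp

open Classical in
lemma finProb_succ (p : ℝ) (n : ℕ) (E : (ℕ → Bool) → Prop) :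
    finProb p (n + 1) E = ∑ c : Fin n → Bool, ∑ b : Bool,
      if E (ext (n + 1) (Fin.snoc c b)) then wt p c * (if b then p else 1 - p) else 0 := by
  rw [finProb]
  rw [← (Fin.snocEquiv (fun _ : Fin (n+1) => Bool)).sum_comp
    (fun c => if E (ext (n+1) c) then wt p c else 0)]
  rw [Fintype.sum_prod_type, Finset.sum_comm]
  refine Finset.sum_congr rfl fun c _ => Finset.sum_congr rfl fun b _ => ?_
  have hsnoc : (Fin.snocEquiv (fun _ : Fin (n+1) => Bool)) (b, c) = Fin.snoc c b := by
    funext i; rfl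
  rw [hsnoc, wt_snoc]

lemma event_split {n : ℕ} (s : Finset ℕ) (c : Fin n → Bool) (b : Bool) :
    (∀ j ∈ Icc 1 (n + 1), (included (ext (n + 1) (Fin.snoc c b)) (j - 1) = true ↔ j ∈ s)) ↔
    ((∀ j ∈ Icc 1 n, (included (ext n c) (j - 1) = true ↔ j ∈ s.erase (n + 1))) ∧
      (included (ext (n + 1) (Fin.snoc c b)) n = true ↔ (n + 1) ∈ s)) := by
  constructor
  · intro h
    refine ⟨fun j hj => ?_, ?_⟩
    · obtain ⟨h1, h2⟩ := mem_Icc.mp hj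
      have hh := h j (mem_Icc.mpr ⟨h1, h2.trans (Nat.le_succ n)⟩)
      rw [included_ext_snoc c b (by omega : j - 1 < n)] at hh
      rw [hh, Finset.mem_erase]
      constructor
      · intro hs; exact ⟨by omega, hs⟩
      · exact And.right
    · have hh := h (n + 1) (mem_Icc.mpr ⟨by omega, le_rfl⟩)
      simpa using hh
  · rintro ⟨h1, h2⟩ j hj
    obtain ⟨ha, hb⟩ := mem_Icc.mp hj
    rcases Nat.lt_or_ge j (n + 1) with hlt | hge
    · have hh := h1 j (mem_Icc.mpr ⟨ha, by omega⟩)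
      rw [included_ext_snoc c b (by omega : j - 1 < n), hh, Finset.mem_erase]
      constructor
      · exact And.right
      · intro hs; exact ⟨by omega, hs⟩
    · have hj1 : j = n + 1 := by omega
      subst hj1; simpa using h2

open Classical in
lemma main_lemma (p : ℝ) (hp1 : p < 1) :
    ∀ (n : ℕ) (s : Finset ℕ), (∀ i ∈ s, 1 ≤ i ∧ i ≤ n) →
    (∀ i ∈ s, ∀ j ∈ s, i < j → i + 1 < j) →
    finProb p n (fun c => ∀ j ∈ Finset.Icc 1 n, (included c (j - 1) = true ↔ j ∈ s)) =
      p ^ s.card * (1 - p) ^ ((n : ℤ) - 2 * s.card + if n ∈ s then 1 else 0) := by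
  have h1p : (1 : ℝ) - p ≠ 0 := by linarith
  intro n
  induction n with
  | zero =>
      intro s hrange hlegal
      have hs : s = ∅ := by
        ext i
        simp only [Finset.notMem_empty, iff_false]
        intro hi; have := hrange i hi; omega
      subst hs
      simp [finProb, wt]
  | succ n ih =>
      intro s hrange hlegal
      set t := s.erase (n + 1) with ht
      have htmem : ∀ i, i ∈ t ↔ (i ∈ s ∧ i ≠ n + 1) := by
        intro i; rw [ht, Finset.mem_erase]; tauto
      have htrange : ∀ i ∈ t, 1 ≤ i ∧ i ≤ n := by
        intro i hi
        rw [htmem] at hi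
        have := hrange i hi.1
        omega
      have htlegal : ∀ i ∈ t, ∀ j ∈ t, i < j → i + 1 < j := fun i hi j hj =>
        hlegal i (Finset.mem_of_mem_erase hi) j (Finset.mem_of_mem_erase hj)
      have iht := ih t htrange htlegal
      rw [finProb] at iht
      rw [finProb_succ]
      set K : ℝ := if (n + 1) ∈ s then p else if n ∈ s then 1 else 1 - p with hK
      have key : ∀ c : Fin n → Bool,
          (∑ b : Bool, if (∀ j ∈ Icc 1 (n + 1),
              (included (ext (n + 1) (Fin.snoc c b)) (j - 1) = true ↔ j ∈ s))
            then wt p c * (if b then p else 1 - p) else 0)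
          = K * (if (∀ j ∈ Icc 1 n, (included (ext n c) (j - 1) = true ↔ j ∈ t))
              then wt p c else 0) := by
        intro c
        rw [Fintype.sum_bool]
        by_cases hEv : ∀ j ∈ Icc 1 n, (included (ext n c) (j - 1) = true ↔ j ∈ t)
        · rw [if_pos hEv]
          have haux : ∀ b : Bool, included (ext (n + 1) (Fin.snoc c b)) n
              = ((!(decide (n ∈ t))) && b) := by
            intro b
            rw [included_snoc]
            congr 1
            cases n with
            | zero =>
                have : (0 : ℕ) ∉ t := fun h => by have := htrange 0 h; omega
                simp [this]
            | succ m =>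
                have hm := hEv (m + 1) (mem_Icc.mpr ⟨by omega, le_rfl⟩)
                simp only [Nat.add_sub_cancel] at hm
                by_cases hmem : m + 1 ∈ t
                · simp [hm.mpr hmem, hmem]
                · have : included (ext (m + 1) c) m = false := by
                    cases h : included (ext (m + 1) c) m
                    · rfl
                    · exact absurd (hm.mp h) hmem
                  simp [this, hmem]
          by_cases hns : (n + 1) ∈ s
          · have hn_not_s : n ∉ s := by
              intro hn
              have := hlegal n hn (n + 1) hns (Nat.lt_succ_self n)
              omega
            have hnt : n ∉ t := fun h => hn_not_s ((htmem n).mp h).1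
            have hK' : K = p := by rw [hK, if_pos hns]
            have c1 : (∀ j ∈ Icc 1 (n + 1),
                (included (ext (n + 1) (Fin.snoc c true)) (j - 1) = true ↔ j ∈ s)) := by
              rw [event_split]
              exact ⟨hEv, by rw [haux true]; simp [hnt, hns]⟩
            have c2 : ¬ (∀ j ∈ Icc 1 (n + 1),
                (included (ext (n + 1) (Fin.snoc c false)) (j - 1) = true ↔ j ∈ s)) := by
              rw [event_split]
              rintro ⟨-, h2⟩
              rw [haux false] at h2
              simp [hns] at h2
            rw [if_pos c1, if_neg c2, hK']
            simp
            ring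
          · have hK2 : K = if n ∈ s then 1 else 1 - p := by rw [hK, if_neg hns]
            by_cases hnn : n ∈ s
            · have hnt : n ∈ t := (htmem n).mpr ⟨hnn, by omega⟩
              have c1 : (∀ j ∈ Icc 1 (n + 1),
                  (included (ext (n + 1) (Fin.snoc c true)) (j - 1) = true ↔ j ∈ s)) := by
                rw [event_split]
                exact ⟨hEv, by rw [haux true]; simp [hnt, hns]⟩
              have c2 : (∀ j ∈ Icc 1 (n + 1),
                  (included (ext (n + 1) (Fin.snoc c false)) (j - 1) = true ↔ j ∈ s)) := by
                rw [event_split]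
                exact ⟨hEv, by rw [haux false]; simp [hns]⟩
              rw [if_pos c1, if_pos c2, hK2, if_pos hnn]
              simp
              ring
            · have hnt : n ∉ t := fun h => hnn ((htmem n).mp h).1
              have c1 : ¬ (∀ j ∈ Icc 1 (n + 1),
                  (included (ext (n + 1) (Fin.snoc c true)) (j - 1) = true ↔ j ∈ s)) := by
                rw [event_split]
                rintro ⟨-, h2⟩
                rw [haux true] at h2
                simp [hnt, hns] at h2
              have c2 : (∀ j ∈ Icc 1 (n + 1),
                  (included (ext (n + 1) (Fin.snoc c false)) (j - 1) = true ↔ j ∈ s)) := by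
                rw [event_split]
                exact ⟨hEv, by rw [haux false]; simp [hns]⟩
              rw [if_neg c1, if_pos c2, hK2, if_neg hnn]
              simp
              ring
        · rw [if_neg hEv, mul_zero]
          have h1 : ¬ (∀ j ∈ Icc 1 (n + 1),
              (included (ext (n + 1) (Fin.snoc c true)) (j - 1) = true ↔ j ∈ s)) := by
            rw [event_split]; tauto
          have h2 : ¬ (∀ j ∈ Icc 1 (n + 1),
              (included (ext (n + 1) (Fin.snoc c false)) (j - 1) = true ↔ j ∈ s)) := by
            rw [event_split]; tauto
          rw [if_neg h1, if_neg h2]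
          ring
      rw [Finset.sum_congr rfl fun c _ => key c, ← Finset.mul_sum, iht]
      by_cases hns : (n + 1) ∈ s
      · have hn_not_s : n ∉ s := by
          intro hn
          have := hlegal n hn (n + 1) hns (Nat.lt_succ_self n)
          omega
        have hnt : n ∉ t := fun h => hn_not_s ((htmem n).mp h).1
        have hcard : s.card = t.card + 1 := by
          rw [ht, Finset.card_erase_of_mem hns]
          have : 1 ≤ s.card := Finset.card_pos.mpr ⟨n + 1, hns⟩
          omega
        rw [hK, if_pos hns, if_neg hnt, if_pos hns, hcard]
        have hexp : ((n : ℤ) + 1 - 2 * ((t.card : ℤ) + 1) + 1) = ((n : ℤ) - 2 * t.card + 0) := by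
          ring
        push_cast
        rw [hexp, pow_succ]
        ring
      · have hts : t = s := by rw [ht, Finset.erase_eq_of_notMem hns]
        rw [hK, if_neg hns, if_neg hns, hts]
        by_cases hnn : n ∈ s
        · rw [if_pos hnn, if_pos hnn]
          have hexp : ((n : ℤ) + 1 - 2 * (s.card : ℤ) + 0) = ((n : ℤ) - 2 * s.card + 1) := by
            ring
          push_cast
          rw [hexp, one_mul]
        · rw [if_neg hnn, if_neg hnn]
          have hexp : ((n : ℤ) + 1 - 2 * (s.card : ℤ) + 0) = ((n : ℤ) - 2 * s.card + 0) + 1 := by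
            ring
          push_cast
          rw [hexp, zpow_add_one₀ h1p]
          ring

/-- **Lemma (probability of a fixed Zeckendorf decomposition).**
If `m = F_{a_1} + ⋯ + F_{a_k}` is a Zeckendorf decomposition with
`1 ≤ a_1`, `a_{j-1} + 1 < a_j`, `a_k ≤ n`, then the probability that the random process
`A_n(p)` equals `{F_{a_1}, …, F_{a_k}}` is `p^k (1-p)^{n-2k}` if `a_k < n`, and
`p^k (1-p)^{n-2k+1}` if `a_k = n`. -/
theorem prob_eq_fixed_decomposition (p : ℝ) (hp0 : 0 < p) (hp1 : p < 1)
    (n : ℕ) (s : Finset ℕ)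
    (hrange : ∀ i ∈ s, 1 ≤ i ∧ i ≤ n)
    (hlegal : ∀ i ∈ s, ∀ j ∈ s, i < j → i + 1 < j) :
    (n ∉ s →
      finProb p n (fun c => ∀ j ∈ Finset.Icc 1 n, (included c (j - 1) = true ↔ j ∈ s)) =
        p ^ s.card * (1 - p) ^ ((n : ℤ) - 2 * s.card)) ∧
    (n ∈ s →
      finProb p n (fun c => ∀ j ∈ Finset.Icc 1 n, (included c (j - 1) = true ↔ j ∈ s)) =
        p ^ s.card * (1 - p) ^ ((n : ℤ) - 2 * s.card + 1)) := by
  have h := main_lemma p hp1 n s hrange hlegal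
  constructor
  · intro hn
    rw [h, if_neg hn, add_zero]
  · intro hn
    rw [h, if_pos hn]

end
end

section
/- For i ≥ 1 and j ≥ i + 2, the conditional probability Prob(F_j ∈ A(p) | F_i ∈ A(p)) equals Prob(F_{j-i-1} ∈ A(p)), i.e., the process restarts after a selected element and a forced gap. -/
open Finset

noncomputable section

/-! Cut the coins into the first `i + 1` (up to the forced gap after `F_i`) and the rest.
Once `F_i` is selected, `F_{i+1}` is excluded whatever its coin, so from `F_{i+2}` on the
selection is the same recursion run on the shifted coins. The two blocks of coins are
independent and the gap coin sums out, so the joint probability factors as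
`Prob(F_i ∈ A(p)) * Prob(F_{j-i-1} ∈ A(p))`, and the first factor is positive. -/

lemma included_congr_s10 {c c' : ℕ → Bool} {n : ℕ} (h : ∀ t ≤ n, c t = c' t) :
    included c n = included c' n := by
  induction n with
  | zero => simp [included, h 0 le_rfl]
  | succ n ih =>
    simp only [included, ih fun t ht => h t (ht.trans n.le_succ), h (n + 1) le_rfl]

lemma coin_of_included {c : ℕ → Bool} {n : ℕ} (h : included c n = true) : c n = true := by
  cases n with
  | zero => exact h
  | succ n => simp_all [included]

lemma included_indicator (n : ℕ) : included (fun t => decide (t = n)) n = true := by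
  cases n with
  | zero => rfl
  | succ n =>
    have hn : included (fun t => decide (t = n + 1)) n = false := by
      cases h : included (fun t => decide (t = n + 1)) n
      · rfl
      · exact absurd (coin_of_included h) (by simp)
    simp [included, hn]

lemma included_add_two {c : ℕ → Bool} {n : ℕ} (h : included c n = true) (m : ℕ) :
    included c (n + 2 + m) = included (fun t => c (n + 2 + t)) m := by
  induction m with
  | zero => simp [included, h]
  | succ m ih =>
    show included c (n + 2 + m + 1) = _
    rw [included, ih]
    rfl

def DependsOnFirst (m : ℕ) (E : (ℕ → Bool) → Prop) : Prop :=
  ∀ c c', (∀ t < m, c t = c' t) → (E c ↔ E c')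

lemma dependsOnFirst_included (n : ℕ) : DependsOnFirst (n + 1) (fun c => included c n = true) :=
  fun _ _ h => by simp only [included_congr_s10 fun t ht => h t (Nat.lt_succ_of_le ht)]

lemma DependsOnFirst.mono {m m' : ℕ} {E : (ℕ → Bool) → Prop} (hE : DependsOnFirst m E)
    (hm : m ≤ m') : DependsOnFirst m' E :=
  fun c c' h => hE c c' fun t ht => h t (ht.trans_le hm)

section Prob

variable {p : ℝ}

lemma wt_pos (hp0 : 0 < p) (hp1 : p < 1) {n : ℕ} (c : Fin n → Bool) : 0 < wt p c :=
  prod_pos fun t _ => by split <;> linarith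

lemma wt_append {m n : ℕ} (a : Fin m → Bool) (b : Fin n → Bool) :
    wt p (Fin.append a b) = wt p a * wt p b := by
  simp [wt, Fin.prod_univ_add]

lemma sum_wt (n : ℕ) : ∑ c : Fin n → Bool, wt p c = 1 := by
  simp only [wt]
  rw [← Fintype.prod_sum fun (_ : Fin n) (b : Bool) => if b then p else 1 - p]
  simp

lemma ext_append_of_lt {m n : ℕ} (a : Fin m → Bool) (b : Fin n → Bool) {t : ℕ} (ht : t < m) :
    _root_.ext (m + n) (Fin.append a b) t = _root_.ext m a t := by
  simp only [_root_.ext, ht, Nat.lt_add_right n ht, dite_true]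
  exact Fin.append_left a b ⟨t, ht⟩

lemma ext_append_add {m n : ℕ} (a : Fin m → Bool) (b : Fin n → Bool) (t : ℕ) :
    _root_.ext (m + n) (Fin.append a b) (m + t) = _root_.ext n b t := by
  by_cases ht : t < n
  · simp only [_root_.ext, ht, Nat.add_lt_add_left ht m, dite_true]
    exact Fin.append_right a b ⟨t, ht⟩
  · simp [_root_.ext, ht]

lemma finProb_append {m n : ℕ} {E G : (ℕ → Bool) → Prop} (hE : DependsOnFirst m E) :
    finProb p (m + n) (fun c => E c ∧ G (fun t => c (m + t))) = finProb p m E * finProb p n G := by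
  classical
  simp only [finProb, sum_mul_sum, ← (Fin.appendEquiv m n).sum_comp, Fintype.sum_prod_type]
  refine sum_congr rfl fun a _ => sum_congr rfl fun b _ => ?_
  simp only [Fin.appendEquiv, Equiv.coe_fn_mk, ext_append_add, wt_append]
  rw [hE _ (_root_.ext m a) fun t ht => ext_append_of_lt a b ht]
  split_ifs <;> simp_all

lemma finProb_add_of_dependsOnFirst {m n : ℕ} {E : (ℕ → Bool) → Prop} (hE : DependsOnFirst m E) :
    finProb p (m + n) E = finProb p m E := by
  have h := finProb_append (p := p) (n := n) (G := fun _ => True) hE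
  simp only [and_true] at h
  rw [h, show finProb p n (fun _ => True) = 1 by simp [finProb, sum_wt], mul_one]

lemma finProb_pos (hp0 : 0 < p) (hp1 : p < 1) {n : ℕ} {E : (ℕ → Bool) → Prop}
    (c : Fin n → Bool) (hc : E (_root_.ext n c)) : 0 < finProb p n E := by
  classical
  refine sum_pos' (fun c _ => ?_) ⟨c, mem_univ c, by simpa [hc] using wt_pos hp0 hp1 c⟩
  split_ifs
  exacts [(wt_pos hp0 hp1 c).le, le_rfl]

lemma probIncl_succ_pos (hp0 : 0 < p) (hp1 : p < 1) (n : ℕ) : 0 < probIncl p (n + 1) := by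
  refine finProb_pos hp0 hp1 (fun t => decide ((t : ℕ) = n)) ?_
  have hc : _root_.ext (n + 1) (fun t => decide ((t : ℕ) = n)) = fun t => decide (t = n) := by
    funext t
    by_cases ht : t < n + 1 <;> simp [_root_.ext, ht]
    omega
  simpa [hc] using included_indicator n

lemma finProb_included_and_included_add_two (n k : ℕ) :
    finProb p (n + 2 + (k + 1)) (fun c => included c n = true ∧ included c (n + 2 + k) = true)
      = probIncl p (n + 1) * probIncl p (k + 1) := by
  have hevent : (fun c => included c n = true ∧ included c (n + 2 + k) = true)
      = fun c => included c n = true ∧ included (fun t => c (n + 2 + t)) k = true := by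
    ext c
    exact and_congr_right fun h => by rw [included_add_two h]
  rw [hevent]
  refine (finProb_append (G := fun d => included d k = true)
    ((dependsOnFirst_included n).mono (m' := n + 2) (by omega))).trans ?_
  -- the coin of the forced gap `n + 1` sums out
  exact congrArg (· * _) (finProb_add_of_dependsOnFirst (n := 1) (dependsOnFirst_included n))

end Prob

/-- For `i ≥ 1` and `j ≥ i + 2`, the conditional probability
`Prob(F_j ∈ A(p) | F_i ∈ A(p))` equals `Prob(F_{j-i-1} ∈ A(p))`: the process restarts
after a selected element and a forced gap. -/
theorem conditional_prob_restart (p : ℝ) (hp0 : 0 < p) (hp1 : p < 1)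
    (i j : ℕ) (hi : 1 ≤ i) (hj : i + 2 ≤ j) :
    finProb p j (fun c => included c (i - 1) = true ∧ included c (j - 1) = true)
        / probIncl p i
      = probIncl p (j - i - 1) := by
  obtain ⟨n, rfl⟩ : ∃ n, i = n + 1 := ⟨i - 1, by omega⟩
  obtain ⟨k, rfl⟩ : ∃ k, j = n + 2 + (k + 1) := ⟨j - n - 3, by omega⟩
  rw [show n + 1 - 1 = n by omega, show n + 2 + (k + 1) - 1 = n + 2 + k by omega,
    show n + 2 + (k + 1) - (n + 1) - 1 = k + 1 by omega, finProb_included_and_included_add_two,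
    mul_div_cancel_left₀ _ (probIncl_succ_pos hp0 hp1 n).ne']

end
end

section
/- (Density Theorem for Random Decompositions) Let S be a subset of the Fibonacci numbers with asymptotic density q(S). Then with probability 1, the limit of #(A_n(p) ∩ S)/#A_n(p) as n → ∞ equals q(S). -/
open Finset

noncomputable section

/-!
Write `X k` for the indicator that `F_{k+1}` is selected. Since `X (k+1) = c (k+1) * (1 - X k)`
with the coin `c (k+1)` independent of the earlier coins, `E X (k+1) = p (1 - E X k)` and
`Cov(X j, X (k+1)) = -p Cov(X j, X k)`. Hence `E X k → p / (1 + p)` geometrically fast and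
`|Cov(X j, X k)| ≤ p ^ |j - k|`, so for any set `T` of indices the variance of
`∑_{k < n, k ∈ T} X k` is `O(n)`. Chebyshev's inequality and Borel–Cantelli along the squares
`n = s²` then give `(∑_{k < n, k ∈ T} (X k - E X k)) / n → 0` almost surely along squares, and
since this sum moves by at most one per step, along all `n`. Applied to `T = {k | F_{k+1} ∈ S}`
and to `T = ℕ`, this gives `#(A_n ∩ S) / n → q(S) p / (1 + p)` and `#A_n / n → p / (1 + p)`
almost surely; the ratio tends to `q(S)`.
-/

lemma DependsOn.mul {ι M : Type*} {α : ι → Type*} [Mul M] {f g : (∀ i, α i) → M} {s : Set ι}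
    (hf : DependsOn f s) (hg : DependsOn g s) : DependsOn (fun x => f x * g x) s :=
  fun _ _ h => by simp only [hf h, hg h]

namespace RandomZeckendorf

open Filter Topology MeasureTheory

variable {p : ℝ}

lemma sum_wt (n : ℕ) : ∑ c : Fin n → Bool, wt p c = 1 := by
  calc ∑ c : Fin n → Bool, wt p c = ∏ _i : Fin n, ∑ b : Bool, if b then p else 1 - p :=
        (Fintype.prod_sum fun _ (b : Bool) => if b then p else 1 - p).symm
    _ = 1 := by simp

lemma wt_nonneg (hp0 : 0 ≤ p) (hp1 : p ≤ 1) {n : ℕ} (c : Fin n → Bool) : 0 ≤ wt p c :=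
  prod_nonneg fun i _ => by split <;> linarith

lemma ext_snoc_of_lt {n i : ℕ} (c : Fin n → Bool) (b : Bool) (hi : i < n) :
    ext (n + 1) (Fin.snoc c b) i = ext n c i := by
  simp only [_root_.ext, dif_pos hi, dif_pos (hi.trans n.lt_succ_self)]
  exact Fin.snoc_castSucc (α := fun _ => Bool) (i := ⟨i, hi⟩) ..

lemma ext_snoc_self {n : ℕ} (c : Fin n → Bool) (b : Bool) : ext (n + 1) (Fin.snoc c b) n = b := by
  simp only [_root_.ext, dif_pos n.lt_succ_self]
  exact Fin.snoc_last (α := fun _ => Bool) ..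

lemma wt_snoc {n : ℕ} (c : Fin n → Bool) (b : Bool) :
    wt p (Fin.snoc c b : Fin (n + 1) → Bool) = wt p c * if b then p else 1 - p := by
  simp only [wt, Fin.prod_univ_castSucc, Fin.snoc_castSucc, Fin.snoc_last]

lemma expVal_succ (n : ℕ) (f : (ℕ → Bool) → ℝ) :
    expVal p (n + 1) f = ∑ c : Fin n → Bool,
      wt p c * ((1 - p) * f (ext (n + 1) (Fin.snoc c false))
        + p * f (ext (n + 1) (Fin.snoc c true))) := by
  rw [expVal, ← (Fin.snocEquiv fun _ => Bool).sum_comp, Fintype.sum_prod_type_right]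
  refine sum_congr rfl fun c _ => ?_
  change ∑ b : Bool, wt p (Fin.snoc c b : Fin (n + 1) → Bool) * f (ext (n + 1) (Fin.snoc c b)) = _
  simp only [Fintype.sum_bool, wt_snoc, Bool.false_eq_true, if_true, if_false]
  ring

lemma expVal_sub (n : ℕ) (f g : (ℕ → Bool) → ℝ) :
    expVal p n (fun c => f c - g c) = expVal p n f - expVal p n g := by
  simp only [expVal, mul_sub, sum_sub_distrib]

lemma expVal_const_mul (n : ℕ) (a : ℝ) (f : (ℕ → Bool) → ℝ) :
    expVal p n (fun c => a * f c) = a * expVal p n f := by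
  simp only [expVal, mul_sum, mul_left_comm]

lemma expVal_const (n : ℕ) (a : ℝ) : expVal p n (fun _ => a) = a := by
  rw [expVal, ← sum_mul, sum_wt, one_mul]

lemma expVal_sum {ι : Type*} (n : ℕ) (s : Finset ι) (f : ι → (ℕ → Bool) → ℝ) :
    expVal p n (fun c => ∑ i ∈ s, f i c) = ∑ i ∈ s, expVal p n (f i) := by
  simp only [expVal, mul_sum]
  exact sum_comm

def coin (k : ℕ) (c : ℕ → Bool) : ℝ := if c k then 1 else 0

def inclInd (k : ℕ) (c : ℕ → Bool) : ℝ := if included c k then 1 else 0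

lemma inclInd_succ (k : ℕ) (c : ℕ → Bool) :
    inclInd (k + 1) c = coin (k + 1) c * (1 - inclInd k c) := by
  cases h : c (k + 1) <;> cases h' : included c k <;> simp [inclInd, coin, included, h, h']

lemma inclInd_mul_self (k : ℕ) (c : ℕ → Bool) : inclInd k c * inclInd k c = inclInd k c := by
  unfold inclInd; split <;> simp

lemma inclInd_mem_Icc (k : ℕ) (c : ℕ → Bool) : inclInd k c ∈ Set.Icc 0 1 := by
  unfold inclInd; split <;> simp

lemma dependsOn_coin (k : ℕ) : DependsOn (coin k) (Set.Iio (k + 1)) :=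
  fun _ _ h => by rw [coin, coin, h k k.lt_succ_self]

lemma dependsOn_included (k : ℕ) : DependsOn (included · k) (Set.Iio (k + 1)) := by
  induction k with
  | zero => exact fun _ _ h => h 0 Nat.zero_lt_one
  | succ k ih =>
    intro x y h
    simp only [included, ih fun i hi => h i (Nat.lt_succ_of_lt hi), h (k + 1) (k + 1).lt_succ_self]

lemma dependsOn_inclInd (k : ℕ) : DependsOn (inclInd k) (Set.Iio (k + 1)) :=
  fun _ _ h => by simp only [inclInd, dependsOn_included k h]

lemma expVal_succ_of_dependsOn {n : ℕ} {f : (ℕ → Bool) → ℝ} (hf : DependsOn f (Set.Iio n)) :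
    expVal p (n + 1) f = expVal p n f := by
  rw [expVal_succ, expVal]
  refine sum_congr rfl fun c _ => ?_
  simp only [hf fun i hi => ext_snoc_of_lt c _ hi]
  ring

lemma expVal_of_dependsOn {m n : ℕ} {f : (ℕ → Bool) → ℝ} (hf : DependsOn f (Set.Iio m))
    (hmn : m ≤ n) : expVal p n f = expVal p m f := by
  induction n, hmn using Nat.le_induction with
  | base => rfl
  | succ n hmn ih =>
    rw [expVal_succ_of_dependsOn (hf.mono (Set.Iio_subset_Iio hmn)), ih]

lemma expVal_coin_mul {m n : ℕ} {f : (ℕ → Bool) → ℝ} (hf : DependsOn f (Set.Iio m))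
    (hmn : m < n) : expVal p n (fun c => coin m c * f c) = p * expVal p n f := by
  have hcf : DependsOn (fun c => coin m c * f c) (Set.Iio (m + 1)) :=
    DependsOn.mul (dependsOn_coin m) (hf.mono (Set.Iio_subset_Iio m.le_succ))
  rw [expVal_of_dependsOn hcf hmn, expVal_of_dependsOn hf hmn.le, expVal_succ, expVal, mul_sum]
  refine sum_congr rfl fun c _ => ?_
  simp only [coin, ext_snoc_self, hf fun i hi => ext_snoc_of_lt c _ hi]
  simp only [Bool.false_eq_true, if_true, if_false]
  ring

def inclMean (p : ℝ) : ℕ → ℝ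
  | 0 => p
  | k + 1 => p * (1 - inclMean p k)

lemma inclMean_mem_Icc (hp0 : 0 ≤ p) (hp1 : p ≤ 1) (k : ℕ) : inclMean p k ∈ Set.Icc 0 1 := by
  induction k with
  | zero => exact ⟨hp0, hp1⟩
  | succ k ih =>
    obtain ⟨h0, h1⟩ := ih
    exact ⟨mul_nonneg hp0 (by linarith), show p * (1 - inclMean p k) ≤ 1 by nlinarith⟩

lemma expVal_inclInd {k n : ℕ} (hkn : k < n) : expVal p n (inclInd k) = inclMean p k := by
  induction k with
  | zero =>
    rw [show inclInd 0 = fun c => coin 0 c * 1 from funext fun _ => (mul_one _).symm,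
      expVal_coin_mul ((dependsOn_const 1).mono (Set.empty_subset _)) hkn, expVal_const,
      mul_one, inclMean]
  | succ k ih =>
    have hdep : DependsOn (fun c => 1 - inclInd k c) (Set.Iio (k + 1)) :=
      fun _ _ h => by simp only [dependsOn_inclInd k h]
    rw [funext (inclInd_succ k), expVal_coin_mul hdep hkn, expVal_sub, expVal_const,
      ih (Nat.lt_of_succ_lt hkn), inclMean]

lemma abs_expVal_inclInd_mul_sub_le (hp0 : 0 ≤ p) (hp1 : p ≤ 1) {j k n : ℕ} (hjk : j ≤ k)
    (hkn : k < n) :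
    |expVal p n (fun c => inclInd j c * inclInd k c) - inclMean p j * inclMean p k|
      ≤ p ^ (k - j) := by
  induction k, hjk using Nat.le_induction with
  | base =>
    obtain ⟨h0, h1⟩ := inclMean_mem_Icc hp0 hp1 j
    simp only [inclInd_mul_self, expVal_inclInd hkn, Nat.sub_self, pow_zero]
    rw [abs_le]
    constructor <;> nlinarith
  | succ k hjk ih =>
    have hdep : DependsOn (fun c => inclInd j c * (1 - inclInd k c)) (Set.Iio (k + 1)) :=
      fun _ _ h => by
        simp only [dependsOn_inclInd k h, dependsOn_inclInd j fun i hi => h i (by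
          simp only [Set.mem_Iio] at hi ⊢; omega)]
    have hstep : expVal p n (fun c => inclInd j c * inclInd (k + 1) c)
          - inclMean p j * inclMean p (k + 1)
        = -p * (expVal p n (fun c => inclInd j c * inclInd k c) - inclMean p j * inclMean p k) := by
      simp only [inclInd_succ, mul_left_comm (inclInd j _) (coin _ _)]
      rw [expVal_coin_mul hdep hkn]
      simp only [mul_sub, mul_one]
      rw [expVal_sub, expVal_inclInd (by omega), inclMean]
      ring
    rw [hstep, abs_mul, abs_neg, abs_of_nonneg hp0, Nat.sub_add_comm hjk, pow_succ']
    exact mul_le_mul_of_nonneg_left (ih (by omega)) hp0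

lemma abs_expVal_inclInd_mul_sub_le_pow_dist (hp0 : 0 ≤ p) (hp1 : p ≤ 1) {j k n : ℕ}
    (hjn : j < n) (hkn : k < n) :
    |expVal p n (fun c => inclInd j c * inclInd k c) - inclMean p j * inclMean p k|
      ≤ p ^ Nat.dist j k := by
  rcases le_total j k with hjk | hkj
  · rw [Nat.dist_eq_sub_of_le hjk]
    exact abs_expVal_inclInd_mul_sub_le hp0 hp1 hjk hkn
  · simp only [mul_comm (inclInd j _), mul_comm (inclMean p j), Nat.dist_comm j k]
    rw [Nat.dist_eq_sub_of_le hkj]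
    exact abs_expVal_inclInd_mul_sub_le hp0 hp1 hkj hjn

lemma sum_range_pow_le (hp0 : 0 ≤ p) (hp1 : p < 1) (n : ℕ) :
    ∑ i ∈ range n, p ^ i ≤ 1 / (1 - p) := by
  have := geom_sum_Ico_le_of_lt_one (m := 0) (n := n) hp0 hp1
  rwa [pow_zero, ← range_eq_Ico] at this

lemma sum_range_pow_dist_le (hp0 : 0 ≤ p) (hp1 : p < 1) (j n : ℕ) :
    ∑ k ∈ range n, p ^ Nat.dist j k ≤ 2 / (1 - p) := by
  calc ∑ k ∈ range n, p ^ Nat.dist j k ≤ ∑ k ∈ range (j + n), p ^ Nat.dist j k :=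
        sum_le_sum_of_subset_of_nonneg (range_subset_range.2 (Nat.le_add_left n j))
          fun _ _ _ => pow_nonneg hp0 _
    _ = ∑ k ∈ range j, p ^ (k + 1) + ∑ k ∈ range n, p ^ k := by
        rw [sum_range_add, ← sum_range_reflect (fun k => p ^ (k + 1)) j]
        congr 1 <;> refine sum_congr rfl fun k hk => congrArg _ ?_ <;>
          simp only [mem_range] at hk <;> simp only [Nat.dist] <;> omega
    _ ≤ ∑ k ∈ range j, p ^ k + ∑ k ∈ range n, p ^ k := by
        gcongr ?_ + _
        exact sum_le_sum fun k _ => pow_le_pow_of_le_one hp0 hp1.le k.le_succ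
    _ ≤ 1 / (1 - p) + 1 / (1 - p) :=
        add_le_add (sum_range_pow_le hp0 hp1 j) (sum_range_pow_le hp0 hp1 n)
    _ = 2 / (1 - p) := by ring

def deviation (p : ℝ) (F : Finset ℕ) (c : ℕ → Bool) : ℝ :=
  ∑ k ∈ F, (inclInd k c - inclMean p k)

lemma expVal_centered_inclInd_mul {j k n : ℕ} (hjn : j < n) (hkn : k < n) :
    expVal p n (fun c => (inclInd j c - inclMean p j) * (inclInd k c - inclMean p k))
      = expVal p n (fun c => inclInd j c * inclInd k c) - inclMean p j * inclMean p k := by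
  have hexpand : (fun c => (inclInd j c - inclMean p j) * (inclInd k c - inclMean p k))
      = fun c => (inclInd j c * inclInd k c - inclMean p k * inclInd j c)
        - (inclMean p j * inclInd k c - inclMean p j * inclMean p k) :=
    funext fun c => by ring
  rw [hexpand, expVal_sub, expVal_sub, expVal_sub, expVal_const_mul, expVal_const_mul,
    expVal_const, expVal_inclInd hjn, expVal_inclInd hkn]
  ring

lemma expVal_deviation_sq_le (hp0 : 0 ≤ p) (hp1 : p < 1) {n : ℕ} {F : Finset ℕ}
    (hF : F ⊆ range n) : expVal p n (fun c => deviation p F c ^ 2) ≤ 2 * n / (1 - p) := by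
  have h1p : 0 ≤ 2 / (1 - p) := div_nonneg zero_le_two (by linarith)
  calc expVal p n (fun c => deviation p F c ^ 2)
      = ∑ j ∈ F, ∑ k ∈ F,
          (expVal p n (fun c => inclInd j c * inclInd k c) - inclMean p j * inclMean p k) := by
        simp only [deviation, sq, sum_mul_sum]
        rw [expVal_sum]
        refine sum_congr rfl fun j hj => ?_
        rw [expVal_sum]
        exact sum_congr rfl fun k hk =>
          expVal_centered_inclInd_mul (mem_range.1 (hF hj)) (mem_range.1 (hF hk))
    _ ≤ ∑ j ∈ F, ∑ k ∈ range n, p ^ Nat.dist j k := by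
        refine sum_le_sum fun j hj => le_trans (sum_le_sum fun k hk => (le_abs_self _).trans
          (abs_expVal_inclInd_mul_sub_le_pow_dist hp0 hp1.le (mem_range.1 (hF hj))
            (mem_range.1 (hF hk)))) ?_
        exact sum_le_sum_of_subset_of_nonneg hF fun _ _ _ => pow_nonneg hp0 _
    _ ≤ ∑ _j ∈ F, 2 / (1 - p) := sum_le_sum fun j _ => sum_range_pow_dist_le hp0 hp1 j n
    _ = #F * (2 / (1 - p)) := by rw [sum_const, nsmul_eq_mul]
    _ ≤ n * (2 / (1 - p)) := by
        gcongr
        exact_mod_cast (card_le_card hF).trans (card_range n).le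
    _ = 2 * n / (1 - p) := by ring

lemma finProb_le_expVal_sq_div (hp0 : 0 ≤ p) (hp1 : p ≤ 1) (n : ℕ) (f : (ℕ → Bool) → ℝ)
    {a : ℝ} (ha : 0 < a) :
    finProb p n (fun c => a ≤ |f c|) ≤ expVal p n (fun c => f c ^ 2) / a ^ 2 := by
  rw [finProb, expVal, sum_div]
  refine sum_le_sum fun c _ => ?_
  have hw := wt_nonneg hp0 hp1 c
  split_ifs with h
  · rw [le_div_iff₀ (by positivity)]
    have : a ^ 2 ≤ f (ext n c) ^ 2 := sq_abs (f (ext n c)) ▸ pow_le_pow_left₀ ha.le h 2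
    exact mul_le_mul_of_nonneg_left this hw
  · positivity

def IsBernoulliProduct (p : ℝ) (μ : Measure (ℕ → Bool)) : Prop :=
  ∀ (s : Finset ℕ) (f : ℕ → Bool),
    μ {c | ∀ i ∈ s, c i = f i} = ∏ i ∈ s, ENNReal.ofReal (if f i then p else 1 - p)

lemma measure_setOf_eq_ofReal_finProb (hp0 : 0 ≤ p) (hp1 : p ≤ 1) {μ : Measure (ℕ → Bool)}
    (hμ : IsBernoulliProduct p μ) {n : ℕ} {E : (ℕ → Bool) → Prop}
    (hE : DependsOn E (Set.Iio n)) : μ {c | E c} = ENNReal.ofReal (finProb p n E) := by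
  classical
  let cyl (c₀ : Fin n → Bool) : Set (ℕ → Bool) := {c | ∀ i ∈ range n, c i = ext n c₀ i}
  have hcyl (c₀ : Fin n → Bool) : μ (cyl c₀) = ENNReal.ofReal (wt p c₀) := by
    rw [hμ, ← ENNReal.ofReal_prod_of_nonneg fun i _ => by split <;> linarith, wt,
      ← Fin.prod_univ_eq_prod_range (fun i => if ext n c₀ i then p else 1 - p)]
    simp [_root_.ext]
  have hmeas (c₀ : Fin n → Bool) : MeasurableSet (cyl c₀) := by
    simp only [cyl, Set.ofPred_forall]
    exact Finset.measurableSet_biInter _ fun i _ =>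
      measurableSet_eq_fun (measurable_pi_apply i) measurable_const
  have hdisj : Set.PairwiseDisjoint ↑(univ.filter fun c₀ => E (ext n c₀)) cyl := by
    intro c₀ _ c₁ _ hne
    refine Set.disjoint_left.2 fun c h₀ h₁ => hne (funext fun i => ?_)
    have := (h₀ i (mem_range.2 i.isLt)).symm.trans (h₁ i (mem_range.2 i.isLt))
    simpa [_root_.ext] using this
  have hunion : {c | E c} = ⋃ c₀ ∈ univ.filter fun c₀ => E (ext n c₀), cyl c₀ := by
    ext c
    simp only [Set.mem_ofPred_eq, Set.mem_iUnion, mem_filter, mem_univ, true_and, exists_prop, cyl]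
    constructor
    · intro hc
      have hagree : ∀ i ∈ Set.Iio n, c i = ext n (fun i => c i) i := fun i hi => by
        simp [_root_.ext, Set.mem_Iio.1 hi]
      exact ⟨fun i => c i, hE hagree ▸ hc, fun i hi => hagree i (mem_range.1 hi)⟩
    · rintro ⟨c₀, hc₀, hc⟩
      exact hE (fun i hi => (hc i (mem_range.2 hi)).symm) ▸ hc₀
  rw [hunion, measure_biUnion_finset hdisj fun c₀ _ => hmeas c₀, sum_congr rfl fun c₀ _ => hcyl c₀,
    ← ENNReal.ofReal_sum_of_nonneg fun c₀ _ => wt_nonneg hp0 hp1 c₀, finProb, sum_filter]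

lemma measure_le_abs_deviation_le (hp0 : 0 ≤ p) (hp1 : p < 1) {μ : Measure (ℕ → Bool)}
    (hμ : IsBernoulliProduct p μ) {n : ℕ} {F : Finset ℕ} (hF : F ⊆ range n) {a : ℝ} (ha : 0 < a) :
    μ {c | a ≤ |deviation p F c|} ≤ ENNReal.ofReal (2 * n / (1 - p) / a ^ 2) := by
  have hdep : DependsOn (deviation p F) (Set.Iio n) := fun x y h =>
    sum_congr rfl fun k hk => by
      rw [dependsOn_inclInd k fun i hi => h i (Nat.lt_of_lt_of_le hi (mem_range.1 (hF hk)))]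
  rw [measure_setOf_eq_ofReal_finProb hp0 hp1.le hμ fun x y h => by simp only [hdep h]]
  exact ENNReal.ofReal_le_ofReal ((finProb_le_expVal_sq_div hp0 hp1.le n _ ha).trans
    (div_le_div_of_nonneg_right (expVal_deviation_sq_le hp0 hp1 hF) (sq_nonneg a)))

lemma abs_sub_le_of_abs_succ_sub_le {d : ℕ → ℝ} {C : ℝ} (hd : ∀ n, |d (n + 1) - d n| ≤ C)
    {m n : ℕ} (hmn : m ≤ n) : |d n - d m| ≤ C * (n - m) := by
  have := dist_le_Ico_sum_of_dist_le hmn (d := fun _ => C) fun _ _ => by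
    rw [Real.dist_eq, abs_sub_comm]
    exact hd _
  rwa [sum_const, Nat.card_Ico, nsmul_eq_mul, Nat.cast_sub hmn, Real.dist_eq, abs_sub_comm,
    mul_comm] at this

lemma tendsto_div_of_tendsto_div_sq {d : ℕ → ℝ} {C : ℝ} (hd : ∀ n, |d (n + 1) - d n| ≤ C)
    (hsq : Tendsto (fun s => d (s ^ 2) / ((s ^ 2 : ℕ) : ℝ)) atTop (𝓝 0)) :
    Tendsto (fun n => d n / n) atTop (𝓝 0) := by
  have hC : 0 ≤ C := (abs_nonneg _).trans (hd 0)
  have hsqrt : Tendsto Nat.sqrt atTop atTop :=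
    tendsto_atTop_atTop.2 fun b => ⟨b * b, fun n hn => Nat.le_sqrt.2 hn⟩
  have hbound : ∀ n ≥ 1, ‖d n / n‖
      ≤ |d (n.sqrt ^ 2) / ((n.sqrt ^ 2 : ℕ) : ℝ)| + 2 * C / n.sqrt := by
    intro n hn
    set t := n.sqrt
    have hlo : t ^ 2 ≤ n := Nat.sqrt_le' n
    have hhi : n ≤ t ^ 2 + 2 * t := Nat.lt_succ_iff.1 <| by
      have := Nat.lt_succ_sqrt' n
      rwa [Nat.succ_eq_add_one, add_sq, mul_one, one_pow] at this
    have hdiff := abs_sub_le_of_abs_succ_sub_le hd hlo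
    push_cast at hdiff
    have ht : (1 : ℝ) ≤ t := by exact_mod_cast Nat.le_sqrt.2 hn
    have hlo' : (t : ℝ) ^ 2 ≤ n := by exact_mod_cast hlo
    have hhi' : (n : ℝ) - t ^ 2 ≤ 2 * t := by
      have : (n : ℝ) ≤ t ^ 2 + 2 * t := by exact_mod_cast hhi
      linarith
    rw [Real.norm_eq_abs, abs_div, abs_div, Nat.abs_cast, Nat.abs_cast, Nat.cast_pow]
    calc |d n| / n ≤ (|d (t ^ 2)| + C * (n - t ^ 2)) / n := by
          gcongr
          linarith [abs_sub_abs_le_abs_sub (d n) (d (t ^ 2))]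
      _ = |d (t ^ 2)| / n + C * (n - t ^ 2) / n := add_div _ _ _
      _ ≤ |d (t ^ 2)| / t ^ 2 + C * (2 * t) / t ^ 2 := by gcongr
      _ = |d (t ^ 2)| / t ^ 2 + 2 * C / t := by
          field_simp
  have hg := (hsq.abs.add (tendsto_const_div_atTop_nhds_zero_nat (2 * C))).comp hsqrt
  rw [abs_zero, zero_add] at hg
  exact squeeze_zero_norm' (eventually_atTop.2 ⟨1, hbound⟩) hg

lemma ae_tendsto_deviation_div_sq (hp0 : 0 ≤ p) (hp1 : p < 1) {μ : Measure (ℕ → Bool)}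
    (hμ : IsBernoulliProduct p μ) {F : ℕ → Finset ℕ} (hF : ∀ n, F n ⊆ range n) :
    ∀ᵐ c ∂μ, Tendsto (fun s => deviation p (F (s ^ 2)) c / ((s ^ 2 : ℕ) : ℝ)) atTop (𝓝 0) := by
  have hrare : ∀ r : ℕ, ∀ᵐ c ∂μ, ∀ᶠ s in atTop,
      c ∉ {c | (((s + 1) ^ 2 : ℕ) : ℝ) / (r + 1) ≤ |deviation p (F ((s + 1) ^ 2)) c|} := by
    intro r
    refine ae_eventually_notMem (ne_top_of_le_ne_top ?_ (ENNReal.tsum_le_tsum fun s =>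
      measure_le_abs_deviation_le hp0 hp1 hμ (hF _) (by positivity)))
    have hsum : Summable fun s : ℕ => 2 * (r + 1) ^ 2 / (1 - p) * (1 / ((s + 1 : ℕ) : ℝ) ^ 2) :=
      ((summable_nat_add_iff 1).2 (Real.summable_one_div_nat_pow.2 one_lt_two)).mul_left _
    convert hsum.tsum_ofReal_ne_top using 4 with s
    have : (1 : ℝ) - p ≠ 0 := by linarith
    field_simp
    push_cast
    ring
  filter_upwards [ae_all_iff.2 hrare] with c hc
  refine (tendsto_add_atTop_iff_nat (f := fun s => deviation p (F (s ^ 2)) c / ((s ^ 2 : ℕ) : ℝ))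
    1).1 (Metric.tendsto_nhds.2 fun ε hε => ?_)
  obtain ⟨r, hr⟩ := exists_nat_one_div_lt hε
  filter_upwards [hc r] with s hs
  rw [not_le] at hs
  rw [Real.dist_eq, sub_zero, abs_div, Nat.abs_cast, div_lt_iff₀ (by positivity)]
  calc |deviation p (F ((s + 1) ^ 2)) c| < (((s + 1) ^ 2 : ℕ) : ℝ) / (r + 1) := hs
    _ = 1 / (r + 1) * (((s + 1) ^ 2 : ℕ) : ℝ) := by ring
    _ ≤ ε * (((s + 1) ^ 2 : ℕ) : ℝ) := by gcongr

lemma abs_deviation_filter_range_succ_sub_le (hp0 : 0 ≤ p) (hp1 : p ≤ 1) (P : ℕ → Prop)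
    [DecidablePred P] (n : ℕ) (c : ℕ → Bool) :
    |deviation p ((range (n + 1)).filter P) c - deviation p ((range n).filter P) c| ≤ 1 := by
  rw [range_add_one, filter_insert]
  split_ifs
  · rw [deviation, deviation, sum_insert (by simp), add_sub_cancel_right, abs_le]
    obtain ⟨h0, h1⟩ := inclInd_mem_Icc n c
    obtain ⟨h0', h1'⟩ := inclMean_mem_Icc hp0 hp1 n
    constructor <;> linarith
  · simp

lemma abs_inclMean_sub_le (hp0 : 0 ≤ p) (hp1 : p ≤ 1) (k : ℕ) :
    |inclMean p k - p / (1 + p)| ≤ p ^ k := by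
  have h1p : 1 + p ≠ 0 := by linarith
  induction k with
  | zero =>
    rw [inclMean, pow_zero, show p - p / (1 + p) = p * p / (1 + p) by field_simp; ring,
      abs_of_nonneg (by positivity), div_le_one (by positivity)]
    nlinarith
  | succ k ih =>
    rw [inclMean, show p * (1 - inclMean p k) - p / (1 + p) = -p * (inclMean p k - p / (1 + p)) by
      field_simp; ring, abs_mul, abs_neg, abs_of_nonneg hp0, pow_succ']
    exact mul_le_mul_of_nonneg_left ih hp0

lemma tendsto_sum_inclMean_div (hp0 : 0 ≤ p) (hp1 : p < 1) (P : ℕ → Prop) [DecidablePred P]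
    {δ : ℝ} (hP : Tendsto (fun n => (#((range n).filter P) : ℝ) / n) atTop (𝓝 δ)) :
    Tendsto (fun n => (∑ k ∈ range n with P k, inclMean p k) / n) atTop
      (𝓝 (p / (1 + p) * δ)) := by
  have hclose (n : ℕ) :
      |∑ k ∈ range n with P k, inclMean p k - p / (1 + p) * #((range n).filter P)|
        ≤ 1 / (1 - p) := by
    have hconst : p / (1 + p) * #((range n).filter P) = ∑ k ∈ range n with P k, p / (1 + p) := by
      rw [sum_const, nsmul_eq_mul, mul_comm]
    rw [hconst, ← sum_sub_distrib]
    calc _ ≤ ∑ k ∈ range n with P k, |inclMean p k - p / (1 + p)| := abs_sum_le_sum_abs _ _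
      _ ≤ ∑ k ∈ range n with P k, p ^ k := sum_le_sum fun k _ => abs_inclMean_sub_le hp0 hp1.le k
      _ ≤ ∑ k ∈ range n, p ^ k :=
          sum_le_sum_of_subset_of_nonneg (filter_subset _ _) fun _ _ _ => pow_nonneg hp0 _
      _ ≤ 1 / (1 - p) := sum_range_pow_le hp0 hp1 n
  have herr : Tendsto (fun n : ℕ =>
      (∑ k ∈ range n with P k, inclMean p k - p / (1 + p) * #((range n).filter P)) / n)
      atTop (𝓝 0) :=
    squeeze_zero_norm (fun n => by
      rw [norm_div, Real.norm_natCast]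
      exact div_le_div_of_nonneg_right (hclose n) n.cast_nonneg)
      (tendsto_const_div_atTop_nhds_zero_nat _)
  have := herr.add (hP.const_mul (p / (1 + p)))
  rw [zero_add] at this
  exact this.congr fun n => by ring

theorem ae_tendsto_sum_inclInd_div (hp0 : 0 ≤ p) (hp1 : p < 1) {μ : Measure (ℕ → Bool)}
    (hμ : IsBernoulliProduct p μ) (P : ℕ → Prop) [DecidablePred P] {δ : ℝ}
    (hP : Tendsto (fun n => (#((range n).filter P) : ℝ) / n) atTop (𝓝 δ)) :
    ∀ᵐ c ∂μ, Tendsto (fun n => (∑ k ∈ range n with P k, inclInd k c) / n) atTop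
      (𝓝 (p / (1 + p) * δ)) := by
  filter_upwards [ae_tendsto_deviation_div_sq hp0 hp1 hμ fun n => filter_subset P (range n)]
    with c hc
  have hdev := tendsto_div_of_tendsto_div_sq (d := fun n => deviation p ((range n).filter P) c)
    (abs_deviation_filter_range_succ_sub_le hp0 hp1.le P · c) hc
  have := hdev.add (tendsto_sum_inclMean_div hp0 hp1 P hP)
  rw [zero_add] at this
  exact this.congr fun n => by rw [deviation, sum_sub_distrib, ← add_div, sub_add_cancel]

lemma cast_card_filter_Icc_one (Q : ℕ → Prop) [DecidablePred Q] (n : ℕ) :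
    (#((Icc 1 n).filter Q) : ℝ) = ∑ k ∈ range n, if Q (k + 1) then 1 else 0 := by
  rw [natCast_card_filter, range_eq_Ico, sum_Ico_add' (fun j => if Q j then (1 : ℝ) else 0)]
  rfl

end RandomZeckendorf

open MeasureTheory in
open Classical in
/-- **Density Theorem for Random Decompositions.** Let `S` be a subset of the Fibonacci
numbers with asymptotic density `q(S)`. Then with probability `1` (with respect to the law
`μ` of the i.i.d. coin flips driving the random Zeckendorf process),
`#(A_n(p) ∩ S)/#A_n(p) → q(S)` as `n → ∞`. -/
theorem density_theorem_random_decompositions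
    (p : ℝ) (hp0 : 0 < p) (hp1 : p < 1)
    (μ : Measure (ℕ → Bool)) [IsProbabilityMeasure μ]
    (hμ : ∀ (s : Finset ℕ) (f : ℕ → Bool),
      μ {c | ∀ i ∈ s, c i = f i}
        = ∏ i ∈ s, ENNReal.ofReal (if f i then p else 1 - p))
    (S : Set ℕ) (q : ℝ)
    (hq : Filter.Tendsto
      (fun n : ℕ => (((Finset.Icc 1 n).filter (fun i => Fib i ∈ S)).card : ℝ) / n)
      Filter.atTop (nhds q)) :
    μ {c | Filter.Tendsto
        (fun n : ℕ =>
          ((((Finset.Icc 1 n).filter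
              (fun j => Fib j ∈ S ∧ included c (j - 1) = true)).card : ℝ))
            / ((countIn n c : ℝ)))
        Filter.atTop (nhds q)} = 1 := by
  open RandomZeckendorf Filter Topology in
  have hS : Tendsto (fun n => (#((range n).filter fun k => Fib (k + 1) ∈ S) : ℝ) / n) atTop
      (𝓝 q) := by
    refine hq.congr fun n => ?_
    rw [cast_card_filter_Icc_one, natCast_card_filter]
  have hall : Tendsto (fun n => (#((range n).filter fun _ => True) : ℝ) / n) atTop (𝓝 1) :=
    tendsto_const_nhds.congr' <| (eventually_ne_atTop 0).mono fun n hn => by simp [hn]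
  have hα : p / (1 + p) ≠ 0 := by positivity
  -- the event is not known to be measurable, so go through `=ᵐ univ` rather than complements
  refine (measure_congr (ae_eq_univ.2 ?_)).trans measure_univ
  filter_upwards [ae_tendsto_sum_inclInd_div hp0.le hp1 hμ _ hS,
    ae_tendsto_sum_inclInd_div hp0.le hp1 hμ _ hall] with c hcS hcall
  have hratio := hcS.div hcall (mul_ne_zero hα one_ne_zero)
  rw [mul_div_mul_left _ _ hα, div_one] at hratio
  refine hratio.congr' <| (eventually_ne_atTop 0).mono fun n hn => ?_
  dsimp only [Pi.div_apply]
  rw [div_div_div_cancel_right₀ (Nat.cast_ne_zero.2 hn), countIn, cast_card_filter_Icc_one,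
    cast_card_filter_Icc_one]
  congr 1 <;> rw [sum_filter] <;> exact sum_congr rfl fun k _ => by simp [inclInd, ite_and]

end
end

section
/- (Density Theorem for Zeckendorf Decompositions) Let S be a subset of the Fibonacci numbers with asymptotic density q(S). For m chosen uniformly at random from the integers in [0, F_{n+1}), let X_n(m) be the number of Zeckendorf summands of m and Y_n(m) the number of those summands lying in S. Then for every ε > 0, Prob(|Y_n(m)/X_n(m) - q(S)| < ε) → 1 as n → ∞. -/
open Finset Filter Topology

/-! ### Fibonacci numbers -/

/-- **Vajda's identity**. -/
theorem Int.fib_add_mul_fib_add_sub_fib_mul_fib_add_add (m a b : ℤ) :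
    fib (m + a) * fib (m + b) - fib m * fib (m + a + b) = (-1) ^ m.natAbs * fib a * fib b := by
  have cassini := fib_succ_mul_fib_pred_sub_fib_sq m
  have ha := fib_add_two (a - 1)
  have hm := fib_add_two (m - 1)
  rw [sub_add_cancel, show a - 1 + 2 = a + 1 by ring] at ha
  rw [sub_add_cancel, show m - 1 + 2 = m + 1 by ring] at hm
  rw [add_assoc, fib_add m a, fib_add m b, fib_add m (a + b), fib_add a b, add_right_comm,
    fib_add (a + 1) b, add_sub_cancel_right]
  linear_combination (fib a * fib b) * cassini + (fib m * fib (m - 1) * fib b) * ha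
    - (fib a * fib b * fib (m - 1)) * hm

namespace Nat

theorem fib_add_mul_fib_add_sub_fib_mul_fib_add_add (m a b : ℕ) :
    (fib (m + a) * fib (m + b) : ℤ) - fib m * fib (m + a + b) = (-1) ^ m * fib a * fib b := by
  have h := Int.fib_add_mul_fib_add_sub_fib_mul_fib_add_add m a b
  simp only [← Nat.cast_add, Int.fib_natCast, Int.natAbs_natCast] at h
  exact h

theorem fib_mul_fib_le_fib_add (a b : ℕ) : fib a * fib b ≤ fib (a + b) := by
  rcases a with _ | a
  · simp
  · calc fib (a + 1) * fib b ≤ fib (a + 1) * fib (b + 1) := by gcongr; exact le_succ b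
      _ ≤ fib (a + 1 + b) := by rw [add_right_comm, fib_add]; exact Nat.le_add_left _ _

theorem fib_add_add_one_le (a b : ℕ) : fib (a + b + 1) ≤ 2 * fib (a + 1) * fib (b + 1) := by
  rw [fib_add, mul_assoc, two_mul]
  gcongr <;> exact le_succ _

theorem fib_add_two_le_two_mul (n : ℕ) : fib (n + 2) ≤ 2 * fib (n + 1) := by
  rw [fib_add_two, two_mul]
  gcongr
  exact le_succ n

theorem fib_add_two_le_eight_mul {n i : ℕ} (hi : 1 ≤ i) (hin : i ≤ n) :
    fib (n + 2) ≤ 8 * (fib i * fib (n + 1 - i)) := by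
  have h1 := fib_add_two_le_two_mul n
  have h2 := fib_add_add_one_le (i - 1) (n + 1 - i)
  have h3 := fib_add_two_le_two_mul (n - i)
  rw [show i - 1 + (n + 1 - i) + 1 = n + 1 by omega, Nat.sub_add_cancel hi,
    show n + 1 - i + 1 = n - i + 2 by omega] at h2
  rw [show n - i + 1 = n + 1 - i by omega] at h3
  calc fib (n + 2) ≤ 2 * (2 * fib i * fib (n - i + 2)) := h1.trans (by omega)
    _ ≤ 2 * (2 * fib i * (2 * fib (n + 1 - i))) := by gcongr
    _ = 8 * (fib i * fib (n + 1 - i)) := by ring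

theorem two_pow_mul_fib_le_fib_add (k m : ℕ) : 2 ^ k * fib m ≤ fib (m + 2 * k) := by
  induction k with
  | zero => simp
  | succ k ih =>
    calc 2 ^ (k + 1) * fib m = 2 * (2 ^ k * fib m) := by ring
      _ ≤ fib (m + 2 * k) + fib (m + 2 * k + 1) := by
        have := @fib_le_fib_succ (m + 2 * k)
        omega
      _ = fib (m + 2 * (k + 1)) := fib_add_two.symm

theorem fib_sub_two_mul_le (n k : ℕ) : (fib (n - 2 * k) : ℝ) ≤ (1 / 2) ^ k * fib n := by
  rw [one_div, inv_pow, inv_mul_eq_div, le_div_iff₀ (by positivity), mul_comm]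
  rcases le_or_gt (2 * k) n with h | h
  · exact_mod_cast (two_pow_mul_fib_le_fib_add k (n - 2 * k)).trans_eq
      (by rw [Nat.sub_add_cancel h])
  · simp [Nat.sub_eq_zero_of_le h.le]

theorem two_pow_mul_fib_mul_fib_succ_mul_le (a b d : ℕ) :
    2 ^ d * (fib a * fib (a + 1) * (fib b * fib (b + 1))) ≤ 4 * fib (a + d + b + 1) ^ 2 := by
  have ha := fib_mul_fib_le_fib_add a (a + 1)
  have hb := fib_mul_fib_le_fib_add b (b + 1)
  have hab := fib_mul_fib_le_fib_add (a + (a + 1)) (b + (b + 1))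
  have hd := two_pow_mul_fib_le_fib_add d (a + (a + 1) + (b + (b + 1)))
  have h2 := fib_add_two_le_two_mul (a + d + b)
  calc 2 ^ d * (fib a * fib (a + 1) * (fib b * fib (b + 1)))
      ≤ 2 ^ d * fib (a + (a + 1) + (b + (b + 1))) := by
        gcongr
        exact (Nat.mul_le_mul ha hb).trans hab
    _ ≤ fib (a + d + b + (a + d + b + 1) + 1) := by convert hd using 2; ring
    _ ≤ 2 * fib (a + d + b + 1) * fib (a + d + b + 2) := fib_add_add_one_le _ _
    _ ≤ 4 * fib (a + d + b + 1) ^ 2 := by nlinarith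

theorem abs_fib_succ_mul_fib_sub_sub_le {n k : ℕ} (hk : k ≤ n) :
    |(fib (k + 1) * fib (n - k) - fib k * fib (n - k + 1) : ℝ)| ≤
      ((1 / 2) ^ k + (1 / 2) ^ (n - k)) * fib n := by
  have hpos : (0 : ℝ) ≤ fib n := Nat.cast_nonneg _
  rcases le_total (2 * k) n with h | h
  · have hv := fib_add_mul_fib_add_sub_fib_mul_fib_add_add k 1 (n - 2 * k)
    rw [show k + (n - 2 * k) = n - k by omega, add_right_comm,
      show k + (n - 2 * k) = n - k by omega] at hv
    have hvR := congrArg (Int.cast : ℤ → ℝ) hv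
    push_cast at hvR
    rw [hvR, abs_mul, abs_mul, abs_pow, abs_neg, abs_one, one_pow, one_mul, fib_one, cast_one,
      abs_one, one_mul, Nat.abs_cast]
    nlinarith [fib_sub_two_mul_le n k, pow_nonneg (by norm_num : (0 : ℝ) ≤ 1 / 2) (n - k)]
  · have hv := fib_add_mul_fib_add_sub_fib_mul_fib_add_add (n - k) (2 * k - n) 1
    rw [show n - k + (2 * k - n) = k by omega] at hv
    have hvR := congrArg (Int.cast : ℤ → ℝ) hv
    push_cast at hvR
    rw [abs_sub_comm, mul_comm (fib (k + 1) : ℝ), hvR, abs_mul, abs_mul, abs_pow, abs_neg,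
      abs_one, one_pow, one_mul, fib_one, cast_one, abs_one, mul_one, Nat.abs_cast,
      show 2 * k - n = n - 2 * (n - k) by omega]
    nlinarith [fib_sub_two_mul_le n (n - k), pow_nonneg (by norm_num : (0 : ℝ) ≤ 1 / 2) k]

end Nat

/-! ### Finite sums -/

theorem sum_Icc_one_eq_sum_range {M : Type*} [AddCommMonoid M] (f : ℕ → M) (n : ℕ) :
    ∑ i ∈ Icc 1 n, f i = ∑ i ∈ range n, f (i + 1) := by
  rw [range_eq_Ico, sum_Ico_add' f 0 n 1]
  rfl

theorem sum_range_half_pow_succ_le (m : ℕ) : ∑ i ∈ range m, (1 / 2 : ℝ) ^ (i + 1) ≤ 1 := by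
  simp_rw [pow_succ, ← sum_mul]
  linarith [sum_geometric_two_le m]

theorem sum_range_half_pow_dist_le (i m : ℕ) :
    ∑ j ∈ range m, (1 / 2 : ℝ) ^ Nat.dist i j ≤ 3 := by
  rw [← sum_filter_add_sum_filter_not (range m) (· ≤ i)]
  have hle : ∑ j ∈ range m with j ≤ i, (1 / 2 : ℝ) ^ Nat.dist i j ≤ 2 :=
    calc ∑ j ∈ range m with j ≤ i, (1 / 2 : ℝ) ^ Nat.dist i j
        ≤ ∑ j ∈ range (i + 1), (1 / 2 : ℝ) ^ (i + 1 - 1 - j) := by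
          refine sum_le_sum_of_subset_of_nonneg (fun j hj => ?_) (fun _ _ _ => by positivity)
            |>.trans_eq' (sum_congr rfl fun j hj => ?_)
          · simp only [mem_filter, mem_range] at hj ⊢
            omega
          · rw [Nat.dist_eq_sub_of_le_right (mem_filter.1 hj).2]
            rfl
      _ ≤ 2 := by
          rw [sum_range_reflect (fun k => (1 / 2 : ℝ) ^ k)]
          exact sum_geometric_two_le _
  have hgt : ∑ j ∈ range m with ¬j ≤ i, (1 / 2 : ℝ) ^ Nat.dist i j ≤ 1 :=
    calc ∑ j ∈ range m with ¬j ≤ i, (1 / 2 : ℝ) ^ Nat.dist i j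
        ≤ ∑ j ∈ Ico (i + 1) (i + 1 + m), (1 / 2 : ℝ) ^ (j - i) := by
          refine sum_le_sum_of_subset_of_nonneg (fun j hj => ?_) (fun _ _ _ => by positivity)
            |>.trans_eq' (sum_congr rfl fun j hj => ?_)
          · simp only [mem_filter, mem_range, mem_Ico] at hj ⊢
            omega
          · rw [Nat.dist_eq_sub_of_le (le_of_not_ge (mem_filter.1 hj).2)]
      _ = ∑ k ∈ range m, (1 / 2 : ℝ) ^ (k + 1) := by
          rw [sum_Ico_eq_sum_range, add_tsub_cancel_left]
          exact sum_congr rfl fun k _ => by congr 1; omega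
      _ ≤ 1 := sum_range_half_pow_succ_le m
  linarith

/-- **Abel's inequality**. -/
theorem abs_sum_range_mul_le {f g : ℕ → ℝ} {n : ℕ} {M : ℝ}
    (hM : ∀ k ≤ n, |∑ i ∈ range k, f i| ≤ M) :
    |∑ i ∈ range n, g i * f i| ≤
      M * (|g (n - 1)| + ∑ i ∈ range (n - 1), |g (i + 1) - g i|) := by
  have hparts := sum_range_by_parts g f n
  simp only [smul_eq_mul] at hparts
  rw [hparts, mul_add, mul_sum (range (n - 1)) (fun i => |g (i + 1) - g i|) M]
  refine (abs_sub _ _).trans (add_le_add ?_ ((abs_sum_le_sum_abs _ _).trans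
    (sum_le_sum fun i hi => ?_)))
  · rw [abs_mul, mul_comm]
    exact mul_le_mul_of_nonneg_right (hM n le_rfl) (abs_nonneg _)
  · rw [abs_mul, mul_comm]
    exact mul_le_mul_of_nonneg_right (hM _ (by rw [mem_range] at hi; omega)) (abs_nonneg _)

/-- **Chebyshev's inequality** for the uniform distribution on `V`. -/
theorem sq_mul_card_filter_mul_card_le {α : Type*} (V : Finset α) (f : α → ℝ)
    {t : ℝ} (ht : 0 < t) :
    t ^ 2 * #{a ∈ V | t ≤ |f a - (∑ b ∈ V, f b) / #V|} * #V ≤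
      #V * ∑ a ∈ V, f a ^ 2 - (∑ a ∈ V, f a) ^ 2 := by
  set μ := (∑ b ∈ V, f b) / #V
  rcases V.eq_empty_or_nonempty with rfl | hV
  · simp
  have hcard : (#V : ℝ) ≠ 0 := by positivity
  have hvar : #V * ∑ a ∈ V, f a ^ 2 - (∑ a ∈ V, f a) ^ 2 = #V * ∑ a ∈ V, (f a - μ) ^ 2 := by
    simp only [sub_sq, sum_add_distrib, sum_sub_distrib, ← sum_mul, ← mul_sum, sum_const,
      nsmul_eq_mul, μ]
    field_simp
    ring
  have hcheb : t ^ 2 * #{a ∈ V | t ≤ |f a - μ|} ≤ ∑ a ∈ V, (f a - μ) ^ 2 :=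
    calc t ^ 2 * #{a ∈ V | t ≤ |f a - μ|} = ∑ a ∈ V with t ≤ |f a - μ|, t ^ 2 := by
          rw [sum_const, nsmul_eq_mul, mul_comm]
      _ ≤ ∑ a ∈ V with t ≤ |f a - μ|, (f a - μ) ^ 2 :=
          sum_le_sum fun a ha => sq_le_sq.2 (by rw [abs_of_pos ht]; exact (mem_filter.1 ha).2)
      _ ≤ ∑ a ∈ V, (f a - μ) ^ 2 :=
          sum_le_sum_of_subset_of_nonneg (filter_subset _ _) fun _ _ _ => sq_nonneg _
  rw [hvar, mul_comm]
  exact mul_le_mul_of_nonneg_left hcheb (Nat.cast_nonneg _)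

/-! ### Moments over a family of finite sets -/

section Moments

variable {ι : Type*} [DecidableEq ι] {V : Finset (Finset ι)} {U : Finset ι}

theorem sum_sum_eq_sum_mul_card_filter_mem (hV : ∀ A ∈ V, A ⊆ U) (w : ι → ℝ) :
    ∑ A ∈ V, ∑ i ∈ A, w i = ∑ i ∈ U, w i * #{A ∈ V | i ∈ A} := by
  rw [sum_comm' (t' := U) (s' := fun i => {A ∈ V | i ∈ A})
    (fun A i => by simp only [mem_filter]; grind)]
  simp [mul_comm]

theorem sum_sq_sum_eq_sum_sum_mul_card_filter (hV : ∀ A ∈ V, A ⊆ U) (w : ι → ℝ) :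
    ∑ A ∈ V, (∑ i ∈ A, w i) ^ 2 =
      ∑ i ∈ U, ∑ j ∈ U, w i * w j * #{A ∈ V | i ∈ A ∧ j ∈ A} := by
  simp_rw [sq, sum_mul_sum]
  rw [sum_comm' (t' := U) (s' := fun i => {A ∈ V | i ∈ A})
    (fun A i => by simp only [mem_filter]; grind)]
  refine sum_congr rfl fun i _ => ?_
  rw [sum_comm' (t' := U) (s' := fun j => {A ∈ V | i ∈ A ∧ j ∈ A})
    (fun A j => by simp only [mem_filter]; grind)]
  simp [mul_comm]

/-- `#V ^ 2` times the covariance of the events `i ∈ A` and `j ∈ A`, for `A` uniform on `V`. -/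
def memCov (V : Finset (Finset ι)) (i j : ι) : ℝ :=
  #V * #{A ∈ V | i ∈ A ∧ j ∈ A} - #{A ∈ V | i ∈ A} * #{A ∈ V | j ∈ A}

theorem memCov_comm (V : Finset (Finset ι)) (i j : ι) : memCov V i j = memCov V j i := by
  simp only [memCov, and_comm, mul_comm]

theorem card_mul_sum_sq_sub_sq_sum_eq (hV : ∀ A ∈ V, A ⊆ U) (w : ι → ℝ) :
    #V * ∑ A ∈ V, (∑ i ∈ A, w i) ^ 2 - (∑ A ∈ V, ∑ i ∈ A, w i) ^ 2 =
      ∑ i ∈ U, ∑ j ∈ U, w i * w j * memCov V i j := by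
  rw [sum_sq_sum_eq_sum_sum_mul_card_filter hV, sum_sum_eq_sum_mul_card_filter_mem hV, sq,
    sum_mul_sum, mul_sum, ← sum_sub_distrib]
  refine sum_congr rfl fun i _ => ?_
  rw [mul_sum, ← sum_sub_distrib]
  refine sum_congr rfl fun j _ => ?_
  rw [memCov]
  ring

theorem card_mul_sum_sq_sub_sq_sum_le (hV : ∀ A ∈ V, A ⊆ U) {w : ι → ℝ}
    (hw : ∀ i, |w i| ≤ 1) :
    #V * ∑ A ∈ V, (∑ i ∈ A, w i) ^ 2 - (∑ A ∈ V, ∑ i ∈ A, w i) ^ 2 ≤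
      ∑ i ∈ U, ∑ j ∈ U, |memCov V i j| := by
  rw [card_mul_sum_sq_sub_sq_sum_eq hV]
  refine sum_le_sum fun i _ => sum_le_sum fun j _ => ?_
  calc w i * w j * memCov V i j ≤ |w i * w j * memCov V i j| := le_abs_self _
    _ ≤ |memCov V i j| := by
      rw [abs_mul, abs_mul]
      exact mul_le_of_le_one_left (abs_nonneg _) (mul_le_one₀ (hw i) (abs_nonneg _) (hw j))

end Moments

/-! ### Sets of pairwise non-consecutive integers -/

def nonAdjacentSubsets (a b : ℕ) : Finset (Finset ℕ) :=
  {A ∈ (Icc a b).powerset | ∀ x ∈ A, ∀ y ∈ A, x < y → x + 1 < y}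

theorem mem_nonAdjacentSubsets {a b : ℕ} {A : Finset ℕ} :
    A ∈ nonAdjacentSubsets a b ↔
      (∀ x ∈ A, a ≤ x ∧ x ≤ b) ∧ ∀ x ∈ A, ∀ y ∈ A, x < y → x + 1 < y := by
  simp [nonAdjacentSubsets, subset_iff]

theorem subset_Icc_of_mem_nonAdjacentSubsets {a b : ℕ} {A : Finset ℕ}
    (hA : A ∈ nonAdjacentSubsets a b) : A ⊆ Icc a b :=
  mem_powerset.1 (mem_filter.1 hA).1

theorem nonAdjacentSubsets_eq_singleton_empty {a b : ℕ} (h : b < a) :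
    nonAdjacentSubsets a b = {∅} := by
  ext A
  simp only [mem_nonAdjacentSubsets, mem_singleton, eq_empty_iff_forall_notMem]
  grind

theorem filter_notMem_nonAdjacentSubsets (a b : ℕ) :
    {A ∈ nonAdjacentSubsets a (b + 1) | b + 1 ∉ A} = nonAdjacentSubsets a b := by
  ext A
  simp only [mem_filter, mem_nonAdjacentSubsets]
  grind

theorem card_filter_mem_and_nonAdjacentSubsets {a b i : ℕ} (ha : 1 ≤ a) (hai : a ≤ i)
    (hib : i ≤ b) (P : Finset ℕ → Prop) [DecidablePred P] :
    #{A ∈ nonAdjacentSubsets a b | i ∈ A ∧ P {x ∈ A | x < i}} =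
      #{B ∈ nonAdjacentSubsets a (i - 2) | P B} * #(nonAdjacentSubsets (i + 2) b) := by
  rw [← card_product]
  refine card_nbij' (fun A => ({x ∈ A | x < i}, {x ∈ A | i < x}))
    (fun BC => insert i (BC.1 ∪ BC.2)) ?_ ?_ ?_ ?_ <;> intro A hA <;>
    simp only [mem_coe, mem_filter, mem_product, mem_nonAdjacentSubsets] at hA ⊢
  · grind
  · have hB : {x ∈ insert i (A.1 ∪ A.2) | x < i} = A.1 := by
      ext x
      simp only [mem_filter, mem_insert, mem_union]
      grind
    rw [hB]
    grind
  · ext x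
    simp only [mem_filter, mem_insert, mem_union]
    grind
  · ext x <;> simp only [mem_filter, mem_insert, mem_union] <;> grind

theorem card_nonAdjacentSubsets {a b : ℕ} (ha : 1 ≤ a) (hab : a ≤ b + 2) :
    #(nonAdjacentSubsets a b) = Nat.fib (b + 3 - a) := by
  induction b using Nat.strong_induction_on with
  | _ b ih =>
  rcases lt_or_ge b a with hba | hab'
  · rw [nonAdjacentSubsets_eq_singleton_empty hba, card_singleton]
    obtain h | h : b + 3 - a = 1 ∨ b + 3 - a = 2 := by omega
    all_goals simp [h]
  obtain ⟨b, rfl⟩ : ∃ b', b = b' + 1 := ⟨b - 1, by omega⟩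
  have hsplit := card_filter_mem_and_nonAdjacentSubsets ha hab' le_rfl (fun _ => True)
  simp only [and_true, filter_true] at hsplit
  rw [← card_filter_add_card_filter_not (p := (b + 1 ∈ ·)), hsplit,
    filter_notMem_nonAdjacentSubsets,
    nonAdjacentSubsets_eq_singleton_empty (a := b + 1 + 2) (by omega), card_singleton, mul_one,
    ih _ (by omega) (by omega), ih _ (by omega) (by omega)]
  rcases Nat.eq_zero_or_pos b with rfl | hb
  · obtain rfl : a = 1 := by omega
    rfl
  rw [show b + 1 + 3 - a = b + 1 - 2 + 3 - a + 2 by omega, Nat.fib_add_two]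
  congr 2
  omega

theorem card_nonAdjacentSubsets_one (n : ℕ) : #(nonAdjacentSubsets 1 n) = Nat.fib (n + 2) :=
  card_nonAdjacentSubsets le_rfl (by omega)

theorem card_nonAdjacentSubsets_one_pos (n : ℕ) : 0 < #(nonAdjacentSubsets 1 n) := by
  rw [card_nonAdjacentSubsets_one]
  exact Nat.fib_pos.2 (by omega)

theorem card_filter_mem_nonAdjacentSubsets {n i : ℕ} (hi : 1 ≤ i) (hin : i ≤ n) :
    #{A ∈ nonAdjacentSubsets 1 n | i ∈ A} = Nat.fib i * Nat.fib (n + 1 - i) := by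
  have hsplit := card_filter_mem_and_nonAdjacentSubsets le_rfl hi hin (fun _ => True)
  simp only [and_true, filter_true] at hsplit
  rw [hsplit, card_nonAdjacentSubsets le_rfl (by omega),
    card_nonAdjacentSubsets (by omega) (by omega)]
  obtain rfl | hi : i = 1 ∨ 2 ≤ i := by omega
  · rfl
  · congr 2 <;> omega

theorem card_filter_mem_mem_nonAdjacentSubsets {n i j : ℕ} (hi : 1 ≤ i) (hij : i < j)
    (hjn : j ≤ n) :
    #{A ∈ nonAdjacentSubsets 1 n | i ∈ A ∧ j ∈ A} =
      Nat.fib i * Nat.fib (j - i - 1) * Nat.fib (n + 1 - j) := by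
  obtain rfl | hij := eq_or_lt_of_le (Nat.succ_le_of_lt hij)
  · rw [Nat.sub_sub, Nat.sub_self, Nat.fib_zero, mul_zero, zero_mul, card_eq_zero,
      filter_eq_empty_iff]
    intro A hA ⟨hiA, hjA⟩
    have := (mem_nonAdjacentSubsets.1 hA).2 _ hiA _ hjA (lt_add_one i)
    omega
  have hsplit := card_filter_mem_and_nonAdjacentSubsets le_rfl (by omega) hjn (i ∈ ·)
  rw [filter_congr (q := fun A => i ∈ A ∧ j ∈ A)
    (fun A _ => by simp only [mem_filter]; grind)] at hsplit
  rw [hsplit, card_filter_mem_nonAdjacentSubsets hi (by omega),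
    card_nonAdjacentSubsets (by omega) (by omega), show j - 2 + 1 - i = j - i - 1 by omega,
    show n + 3 - (j + 2) = n + 1 - j by omega]

section Zeckendorf

variable (ZD : ℕ → Finset ℕ)

theorem injective_of_eq_sum_fib (hZD : ∀ m, m = ∑ i ∈ ZD m, Fib i) : Function.Injective ZD :=
  fun m m' h => by rw [hZD m, hZD m', h]

theorem image_range_fib_eq_nonAdjacentSubsets
    (hZD : ∀ m : ℕ, (∀ i ∈ ZD m, 1 ≤ i) ∧
      (∀ i ∈ ZD m, ∀ j ∈ ZD m, i < j → i + 1 < j) ∧ m = ∑ i ∈ ZD m, Fib i) (n : ℕ) :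
    (range (Fib (n + 1))).image ZD = nonAdjacentSubsets 1 n := by
  refine eq_of_subset_of_card_le (image_subset_iff.2 fun m hm => ?_) ?_
  · refine mem_nonAdjacentSubsets.2 ⟨fun i hi => ⟨(hZD m).1 i hi, ?_⟩, (hZD m).2.1⟩
    by_contra! hni
    have h1 : Fib i ≤ m := (hZD m).2.2 ▸ single_le_sum (fun _ _ => Nat.zero_le _) hi
    have h2 : Fib (n + 1) ≤ Fib i := Nat.fib_mono (by omega)
    have := mem_range.1 hm
    omega
  · rw [card_image_of_injective _ (injective_of_eq_sum_fib ZD fun m => (hZD m).2.2), card_range,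
      card_nonAdjacentSubsets_one]
    rfl

theorem card_filter_range_fib_eq
    (hZD : ∀ m : ℕ, (∀ i ∈ ZD m, 1 ≤ i) ∧
      (∀ i ∈ ZD m, ∀ j ∈ ZD m, i < j → i + 1 < j) ∧ m = ∑ i ∈ ZD m, Fib i)
    (n : ℕ) (P : Finset ℕ → Prop) [DecidablePred P] :
    #{m ∈ range (Fib (n + 1)) | P (ZD m)} = #{A ∈ nonAdjacentSubsets 1 n | P A} := by
  rw [← image_range_fib_eq_nonAdjacentSubsets ZD hZD, filter_image,
    card_image_of_injective _ (injective_of_eq_sum_fib ZD fun m => (hZD m).2.2)]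

end Zeckendorf

/-! ### Second moment on non-adjacent sets -/

theorem abs_memCov_nonAdjacentSubsets_le_of_lt {n i j : ℕ} (hi : 1 ≤ i) (hij : i < j)
    (hjn : j ≤ n) :
    |memCov (nonAdjacentSubsets 1 n) i j| ≤
      4 * (1 / 2) ^ (j - i) * #(nonAdjacentSubsets 1 n) ^ 2 := by
  rw [memCov, card_nonAdjacentSubsets_one, card_filter_mem_mem_nonAdjacentSubsets hi hij hjn,
    card_filter_mem_nonAdjacentSubsets hi (by omega),
    card_filter_mem_nonAdjacentSubsets (by omega) hjn]
  push_cast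
  have hv := Nat.fib_add_mul_fib_add_sub_fib_mul_fib_add_add (j - i - 1) (i + 1) (n + 2 - j)
  rw [show j - i - 1 + (i + 1) = j by omega, show j - i - 1 + (n + 2 - j) = n + 1 - i by omega,
    show j + (n + 2 - j) = n + 2 by omega, show n + 2 - j = n + 1 - j + 1 by omega] at hv
  have hK := Nat.two_pow_mul_fib_mul_fib_succ_mul_le i (n + 1 - j) (j - i)
  rw [show i + (j - i) + (n + 1 - j) + 1 = n + 2 by omega] at hK
  set K := Nat.fib i * Nat.fib (i + 1) * (Nat.fib (n + 1 - j) * Nat.fib (n + 1 - j + 1))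
  have hcov : (Nat.fib (n + 2) * (Nat.fib i * Nat.fib (j - i - 1) * Nat.fib (n + 1 - j)) -
      Nat.fib i * Nat.fib (n + 1 - i) * (Nat.fib j * Nat.fib (n + 1 - j)) : ℝ) =
      -(-1) ^ (j - i - 1) * K := by
    have hvR := congrArg (Int.cast : ℤ → ℝ) hv
    push_cast at hvR
    push_cast [K]
    linear_combination (-(Nat.fib i * Nat.fib (n + 1 - j) : ℝ)) * hvR
  rw [hcov, abs_mul, abs_neg, abs_pow, abs_neg, abs_one, one_pow, one_mul, Nat.abs_cast,
    one_div, inv_pow, mul_assoc, ← div_eq_inv_mul, ← mul_div_assoc, le_div_iff₀ (by positivity),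
    mul_comm]
  exact_mod_cast hK

theorem abs_memCov_nonAdjacentSubsets_le {n i j : ℕ} (hi : i ∈ Icc 1 n) (hj : j ∈ Icc 1 n) :
    |memCov (nonAdjacentSubsets 1 n) i j| ≤
      4 * (1 / 2) ^ Nat.dist i j * #(nonAdjacentSubsets 1 n) ^ 2 := by
  rw [mem_Icc] at hi hj
  rcases lt_trichotomy i j with hij | rfl | hji
  · rw [Nat.dist_eq_sub_of_le hij.le]
    exact abs_memCov_nonAdjacentSubsets_le_of_lt hi.1 hij hj.2
  · have hc : #{A ∈ nonAdjacentSubsets 1 n | i ∈ A} ≤ #(nonAdjacentSubsets 1 n) :=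
      card_filter_le _ _
    simp only [memCov, and_self, Nat.dist_self, pow_zero, mul_one]
    rw [abs_of_nonneg (by
      rw [← mul_sub_right_distrib]
      exact mul_nonneg (by simpa) (by positivity))]
    nlinarith
  · rw [memCov_comm, Nat.dist_comm, Nat.dist_eq_sub_of_le hji.le]
    exact abs_memCov_nonAdjacentSubsets_le_of_lt hj.1 hji hi.2

theorem card_mul_sum_sq_sub_sq_sum_nonAdjacentSubsets_le (n : ℕ) {w : ℕ → ℝ}
    (hw : ∀ i, |w i| ≤ 1) :
    #(nonAdjacentSubsets 1 n) * ∑ A ∈ nonAdjacentSubsets 1 n, (∑ i ∈ A, w i) ^ 2 -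
        (∑ A ∈ nonAdjacentSubsets 1 n, ∑ i ∈ A, w i) ^ 2 ≤
      12 * n * #(nonAdjacentSubsets 1 n) ^ 2 := by
  set N : ℝ := (#(nonAdjacentSubsets 1 n) : ℝ)
  refine (card_mul_sum_sq_sub_sq_sum_le
    (fun A hA => subset_Icc_of_mem_nonAdjacentSubsets hA) hw).trans ?_
  calc ∑ i ∈ Icc 1 n, ∑ j ∈ Icc 1 n, |memCov (nonAdjacentSubsets 1 n) i j|
      ≤ ∑ i ∈ Icc 1 n, ∑ j ∈ range (n + 1), 4 * N ^ 2 * (1 / 2) ^ Nat.dist i j := by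
        refine sum_le_sum fun i hi => (sum_le_sum fun j hj => ?_).trans
          (sum_le_sum_of_subset_of_nonneg (fun j hj => ?_) fun _ _ _ => by positivity)
        · rw [mul_right_comm]
          exact abs_memCov_nonAdjacentSubsets_le hi hj
        · rw [mem_range]
          exact Nat.lt_succ_of_le (mem_Icc.1 hj).2
    _ ≤ ∑ i ∈ Icc 1 n, 12 * N ^ 2 := by
        refine sum_le_sum fun i _ => ?_
        rw [← mul_sum]
        nlinarith [sum_range_half_pow_dist_le i (n + 1), sq_nonneg N]
    _ = 12 * n * N ^ 2 := by
        rw [sum_const, Nat.card_Icc, nsmul_eq_mul]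
        push_cast
        ring

theorem sq_mul_card_filter_nonAdjacentSubsets_le (n : ℕ) {w : ℕ → ℝ} (hw : ∀ i, |w i| ≤ 1)
    {t : ℝ} (ht : 0 < t) :
    t ^ 2 * #{A ∈ nonAdjacentSubsets 1 n | t ≤ |∑ i ∈ A, w i -
        (∑ B ∈ nonAdjacentSubsets 1 n, ∑ i ∈ B, w i) / #(nonAdjacentSubsets 1 n)|} ≤
      12 * n * #(nonAdjacentSubsets 1 n) := by
  have hN : (0 : ℝ) < #(nonAdjacentSubsets 1 n) := by
    exact_mod_cast card_nonAdjacentSubsets_one_pos n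
  refine le_of_mul_le_mul_right ?_ hN
  calc _ ≤ _ := sq_mul_card_filter_mul_card_le _ (fun A => ∑ i ∈ A, w i) ht
    _ ≤ 12 * n * #(nonAdjacentSubsets 1 n) ^ 2 :=
        card_mul_sum_sq_sub_sq_sum_nonAdjacentSubsets_le n hw
    _ = _ := by ring

/-! ### First moment on non-adjacent sets -/

theorem mul_card_le_sum_card_nonAdjacentSubsets (n : ℕ) :
    n * #(nonAdjacentSubsets 1 n) ≤ 8 * ∑ A ∈ nonAdjacentSubsets 1 n, ∑ _i ∈ A, (1 : ℝ) := by
  rw [sum_sum_eq_sum_mul_card_filter_mem (fun A hA => subset_Icc_of_mem_nonAdjacentSubsets hA),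
    mul_sum]
  calc (n : ℝ) * #(nonAdjacentSubsets 1 n) =
        ∑ _i ∈ Icc 1 n, (#(nonAdjacentSubsets 1 n) : ℝ) := by
        rw [sum_const, Nat.card_Icc, nsmul_eq_mul, add_tsub_cancel_right]
    _ ≤ _ := sum_le_sum fun i hi => by
        rw [mem_Icc] at hi
        rw [one_mul, card_filter_mem_nonAdjacentSubsets hi.1 hi.2, card_nonAdjacentSubsets_one]
        exact_mod_cast Nat.fib_add_two_le_eight_mul hi.1 hi.2

theorem sum_range_abs_fib_mul_fib_sub_le (n : ℕ) :
    ∑ i ∈ range (n - 1), |(Nat.fib (i + 1 + 1) * Nat.fib (n - (i + 1)) -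
        Nat.fib (i + 1) * Nat.fib (n - i) : ℝ)| ≤ 2 * Nat.fib n := by
  calc _ ≤ ∑ i ∈ range (n - 1),
        ((1 / 2) ^ (i + 1) + (1 / 2) ^ (n - (i + 1))) * (Nat.fib n : ℝ) := by
        refine sum_le_sum fun i hi => ?_
        rw [mem_range] at hi
        have := Nat.abs_fib_succ_mul_fib_sub_sub_le (n := n) (k := i + 1) (by omega)
        rwa [show n - (i + 1) + 1 = n - i by omega] at this
    _ = (∑ i ∈ range (n - 1), (1 / 2 : ℝ) ^ (i + 1) +
          ∑ i ∈ range (n - 1), (1 / 2 : ℝ) ^ (n - 1 - 1 - i + 1)) * Nat.fib n := by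
        rw [← sum_mul, sum_add_distrib]
        congr 2
        exact sum_congr rfl fun i hi => by rw [mem_range] at hi; congr 1; omega
    _ ≤ 2 * Nat.fib n := by
        rw [sum_range_reflect (fun j => (1 / 2 : ℝ) ^ (j + 1))]
        nlinarith [sum_range_half_pow_succ_le (n - 1), (Nat.cast_nonneg _ : (0 : ℝ) ≤ Nat.fib n)]

theorem abs_sum_sum_nonAdjacentSubsets_le (n : ℕ) (w : ℕ → ℝ) {M : ℝ}
    (hM : ∀ k ≤ n, |∑ i ∈ Icc 1 k, w i| ≤ M) :
    |∑ A ∈ nonAdjacentSubsets 1 n, ∑ i ∈ A, w i| ≤ 3 * M * #(nonAdjacentSubsets 1 n) := by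
  have hM0 : 0 ≤ M := (abs_nonneg _).trans (hM 0 (Nat.zero_le _))
  set g : ℕ → ℝ := fun i => Nat.fib (i + 1) * Nat.fib (n - i)
  have hsum : ∑ A ∈ nonAdjacentSubsets 1 n, ∑ i ∈ A, w i = ∑ i ∈ range n, g i * w (i + 1) := by
    rw [sum_sum_eq_sum_mul_card_filter_mem (fun A hA => subset_Icc_of_mem_nonAdjacentSubsets hA),
      sum_Icc_one_eq_sum_range]
    refine sum_congr rfl fun i hi => ?_
    rw [card_filter_mem_nonAdjacentSubsets (by omega) (by rw [mem_range] at hi; omega),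
      show n + 1 - (i + 1) = n - i by omega, mul_comm]
    push_cast
    rfl
  have hlast : |g (n - 1)| ≤ Nat.fib n := by
    rcases n with _ | n <;> simp [g]
  have hN : (Nat.fib n : ℝ) ≤ #(nonAdjacentSubsets 1 n) := by
    rw [card_nonAdjacentSubsets_one]
    exact_mod_cast Nat.fib_mono (by omega)
  rw [hsum]
  refine (abs_sum_range_mul_le (f := fun i => w (i + 1)) (M := M) fun k hk => ?_).trans ?_
  · rw [← sum_Icc_one_eq_sum_range]
    exact hM k hk
  · have := sum_range_abs_fib_mul_fib_sub_le n
    calc M * (|g (n - 1)| + ∑ i ∈ range (n - 1), |g (i + 1) - g i|) ≤ M * (3 * Nat.fib n) := by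
          gcongr
          linarith
      _ ≤ _ := by nlinarith

/-! ### Concentration of the proportion of summands in `S` -/

theorem abs_ite_sub_le_one (P : Prop) [Decidable P] {q : ℝ} (hq0 : 0 ≤ q) (hq1 : q ≤ 1) :
    |(if P then 1 else 0) - q| ≤ 1 := by
  split_ifs <;> rw [abs_le] <;> constructor <;> linarith

theorem abs_card_filter_div_sub_lt {A : Finset ℕ} (p : ℕ → Prop) [DecidablePred p]
    {q ε t : ℝ} (hε : 0 < ε) (ht : 0 ≤ t) (hA : t < #A)
    (hdev : |∑ i ∈ A, ((if p i then 1 else 0) - q)| < ε * t) :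
    |(#{i ∈ A | p i} : ℝ) / #A - q| < ε := by
  have hA0 : (0 : ℝ) < #A := ht.trans_lt hA
  rw [sum_sub_distrib, sum_boole, sum_const, nsmul_eq_mul, mul_comm] at hdev
  rw [div_sub' hA0.ne', abs_div, Nat.abs_cast, div_lt_iff₀ hA0, mul_comm _ q]
  linarith [mul_lt_mul_of_pos_left hA hε]

theorem card_filter_not_abs_div_sub_lt_le {n : ℕ} (hn : 1 ≤ n) (p : ℕ → Prop) [DecidablePred p]
    {q ε : ℝ} (hq0 : 0 ≤ q) (hq1 : q ≤ 1) (hε : 0 < ε)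
    (hW : ∀ k ≤ n, |∑ i ∈ Icc 1 k, ((if p i then 1 else 0) - q)| ≤ ε * n / 120) :
    (#{A ∈ nonAdjacentSubsets 1 n | ¬|(#{i ∈ A | p i} : ℝ) / #A - q| < ε} : ℝ) ≤
      (3072 + 19200 / ε ^ 2) / n * #(nonAdjacentSubsets 1 n) := by
  set V := nonAdjacentSubsets 1 n
  set w : ℕ → ℝ := fun i => (if p i then 1 else 0) - q
  have hw : ∀ i, |w i| ≤ 1 := fun i => abs_ite_sub_le_one (p i) hq0 hq1
  have hnR : (0 : ℝ) < n := by exact_mod_cast hn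
  have hN : (0 : ℝ) < #V := by exact_mod_cast card_nonAdjacentSubsets_one_pos n
  set μX := (∑ B ∈ V, ∑ _i ∈ B, (1 : ℝ)) / #V
  set μF := (∑ B ∈ V, ∑ i ∈ B, w i) / #V
  have hμX : n / 8 ≤ μX := by
    rw [le_div_iff₀ hN]
    linarith [mul_card_le_sum_card_nonAdjacentSubsets n]
  have hμF : |μF| ≤ ε * n / 40 := by
    rw [abs_div, Nat.abs_cast, div_le_iff₀ hN]
    linarith [abs_sum_sum_nonAdjacentSubsets_le n w hW]
  set B₁ := {A ∈ V | n / 16 ≤ |∑ _i ∈ A, (1 : ℝ) - μX|}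
  set B₂ := {A ∈ V | ε * n / 40 ≤ |∑ i ∈ A, w i - μF|}
  have hB₁ := sq_mul_card_filter_nonAdjacentSubsets_le n (w := fun _ => 1) (by simp)
    (t := n / 16) (by positivity)
  have hB₂ := sq_mul_card_filter_nonAdjacentSubsets_le n hw (t := ε * n / 40) (by positivity)
  have hsub : {A ∈ V | ¬|(#{i ∈ A | p i} : ℝ) / #A - q| < ε} ⊆ B₁ ∪ B₂ := by
    intro A hA
    simp only [mem_union, B₁, B₂, mem_filter, sum_const, nsmul_eq_mul, mul_one] at hA ⊢
    by_contra! hgood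
    refine hA.2 (abs_card_filter_div_sub_lt p hε (t := n / 16) (by positivity)
      (by linarith [(abs_lt.1 (hgood.1 hA.1)).1]) ?_)
    linarith [abs_sub_abs_le_abs_sub (∑ i ∈ A, w i) μF, hgood.2 hA.1, mul_pos hε hnR]
  have hcard₁ : (#B₁ : ℝ) ≤ 3072 / n * #V := by
    rw [div_mul_eq_mul_div, le_div_iff₀ hnR]
    nlinarith
  have hcard₂ : (#B₂ : ℝ) ≤ 19200 / ε ^ 2 / n * #V := by
    rw [div_div, div_mul_eq_mul_div, le_div_iff₀ (by positivity)]
    nlinarith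
  calc (#{A ∈ V | ¬|(#{i ∈ A | p i} : ℝ) / #A - q| < ε} : ℝ) ≤ #(B₁ ∪ B₂) := by
        exact_mod_cast card_le_card hsub
    _ ≤ #B₁ + #B₂ := by exact_mod_cast card_union_le _ _
    _ ≤ _ := by
        rw [add_div, add_mul]
        exact add_le_add hcard₁ hcard₂

theorem eventually_forall_abs_le_mul_of_tendsto_div {W : ℕ → ℝ}
    (hW : Tendsto (fun k => W k / k) atTop (𝓝 0)) {δ : ℝ} (hδ : 0 < δ) :
    ∀ᶠ n in atTop, ∀ k ≤ n, |W k| ≤ δ * n := by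
  have hsmall : ∀ᶠ k in atTop, |W k / k| < δ := by
    simpa using (tendsto_order.1 hW.abs).2 δ (by simpa using hδ)
  obtain ⟨K, hK⟩ := eventually_atTop.1 (hsmall.and (eventually_ge_atTop 1))
  filter_upwards [eventually_ge_atTop ⌈(∑ k ∈ range K, |W k|) / δ⌉₊] with n hn k hk
  rcases le_or_gt K k with hKk | hkK
  · obtain ⟨hWk, hk1⟩ := hK k hKk
    have hk0 : (0 : ℝ) < k := by exact_mod_cast hk1
    rw [abs_div, Nat.abs_cast, div_lt_iff₀ hk0] at hWk
    nlinarith [(Nat.cast_le (α := ℝ)).2 hk]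
  · calc |W k| ≤ ∑ k ∈ range K, |W k| :=
          single_le_sum (f := fun k => |W k|) (fun _ _ => abs_nonneg _) (mem_range.2 hkK)
      _ ≤ δ * n := by
          rw [← div_le_iff₀' hδ]
          exact (Nat.le_ceil _).trans (by exact_mod_cast hn)

theorem mem_Icc_of_tendsto_card_filter_Icc_div (p : ℕ → Prop) [DecidablePred p] {q : ℝ}
    (hq : Tendsto (fun n : ℕ => (#{i ∈ Icc 1 n | p i} : ℝ) / n) atTop (𝓝 q)) :
    q ∈ Set.Icc 0 1 :=
  isClosed_Icc.mem_of_tendsto hq <| Eventually.of_forall fun n =>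
    ⟨by positivity, div_le_one_of_le₀ (by simpa using card_filter_le (Icc 1 n) p) (by positivity)⟩

theorem tendsto_card_filter_nonAdjacentSubsets_div (p : ℕ → Prop) [DecidablePred p] {q : ℝ}
    (hq : Tendsto (fun n : ℕ => (#{i ∈ Icc 1 n | p i} : ℝ) / n) atTop (𝓝 q))
    {ε : ℝ} (hε : 0 < ε) :
    Tendsto (fun n => (#{A ∈ nonAdjacentSubsets 1 n | ¬|(#{i ∈ A | p i} : ℝ) / #A - q| < ε} : ℝ) /
      #(nonAdjacentSubsets 1 n)) atTop (𝓝 0) := by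
  obtain ⟨hq0, hq1⟩ := mem_Icc_of_tendsto_card_filter_Icc_div p hq
  have hdev : Tendsto (fun k : ℕ => (∑ i ∈ Icc 1 k, ((if p i then 1 else 0) - q)) / k)
      atTop (𝓝 0) := by
    refine (sub_self q ▸ hq.sub_const q).congr' ?_
    filter_upwards [eventually_ge_atTop 1] with k hk
    rw [sum_sub_distrib, sum_boole, sum_const, Nat.card_Icc, add_tsub_cancel_right, nsmul_eq_mul,
      sub_div, mul_div_cancel_left₀ _ (by positivity : (k : ℝ) ≠ 0)]
  refine squeeze_zero' (Eventually.of_forall fun n => by positivity) ?_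
    (tendsto_const_div_atTop_nhds_zero_nat (3072 + 19200 / ε ^ 2))
  filter_upwards [eventually_ge_atTop 1,
    eventually_forall_abs_le_mul_of_tendsto_div hdev (δ := ε / 120) (by positivity)] with n hn hW
  rw [div_le_iff₀ (by exact_mod_cast card_nonAdjacentSubsets_one_pos n)]
  exact card_filter_not_abs_div_sub_lt_le hn p hq0 hq1 hε fun k hk => (hW k hk).trans_eq (by ring)

open Classical in
/-- **Density Theorem for Zeckendorf Decompositions.** Let `S` be a subset of the
Fibonacci numbers with asymptotic density `q(S)`. For `m` chosen uniformly at random from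
the integers in `[0, F_{n+1})`, let `X_n(m)` be the number of Zeckendorf summands of `m`
and `Y_n(m)` the number of those summands lying in `S`. Then for every `ε > 0`,
`Prob(|Y_n(m)/X_n(m) - q(S)| < ε) → 1` as `n → ∞`. -/
theorem density_theorem_zeckendorf
    (ZD : ℕ → Finset ℕ)
    (hZD : ∀ m : ℕ,
      (∀ i ∈ ZD m, 1 ≤ i) ∧
      (∀ i ∈ ZD m, ∀ j ∈ ZD m, i < j → i + 1 < j) ∧
      m = ∑ i ∈ ZD m, Fib i)
    (S : Set ℕ) (q : ℝ)
    (hq : Filter.Tendsto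
      (fun n : ℕ => (((Finset.Icc 1 n).filter (fun i => Fib i ∈ S)).card : ℝ) / n)
      Filter.atTop (nhds q))
    (ε : ℝ) (hε : 0 < ε) :
    Filter.Tendsto
      (fun n : ℕ =>
        (((Finset.range (Fib (n + 1))).filter (fun m =>
          |((((ZD m).filter (fun i => Fib i ∈ S)).card : ℝ) / ((ZD m).card : ℝ)) - q|
            < ε)).card : ℝ) / (Fib (n + 1) : ℝ))
      Filter.atTop (nhds 1) := by
  have hbad := tendsto_card_filter_nonAdjacentSubsets_div (fun i => Fib i ∈ S) hq hε
  rw [← sub_zero (1 : ℝ)]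
  refine (tendsto_const_nhds.sub hbad).congr fun n => ?_
  have hN : (#(nonAdjacentSubsets 1 n) : ℝ) ≠ 0 := by
    exact_mod_cast (card_nonAdjacentSubsets_one_pos n).ne'
  have hFib : (Fib (n + 1) : ℝ) = #(nonAdjacentSubsets 1 n) := by
    rw [card_nonAdjacentSubsets_one]
    rfl
  rw [card_filter_range_fib_eq ZD hZD n (fun A => |(#{i ∈ A | Fib i ∈ S} : ℝ) / #A - q| < ε),
    hFib, eq_div_iff hN, sub_mul, one_mul, div_mul_cancel₀ _ hN, sub_eq_iff_eq_add,
    ← Nat.cast_add, card_filter_add_card_filter_not]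
end
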